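/- arXiv:gr-qc/0608063 — 10 statements merged into one kernel-verified Lean document; each statement's English description precedes it below -/
import Mathlib

section
/- Let (X, ≪) be a chronological set and let P ⊆ X be a nonempty past set. Then P equals the union of the family of all IPs contained in P that are maximal (under set inclusion) among the IPs contained in P; equivalently, every point of P belongs to some maximal IP contained in P. -/
namespace CausalBoundary

variable {X : Type*}

/-- The past of a set of points: `I⁻[S]`. -/
def pastOf (r : X → X → Prop) (S : Set X) : Set X := {x | ∃ s ∈ S, r x s}

/-- The future of a set of points: `I⁺[S]`. -/
def futureOf (r : X → X → Prop) (S : Set X) : Set X := {x | ∃ s ∈ S, r s x}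

/-- The past of a point: `I⁻(x)`. -/
def pastPt (r : X → X → Prop) (x : X) : Set X := {y | r y x}

/-- The future of a point: `I⁺(x)`. -/
def futPt (r : X → X → Prop) (x : X) : Set X := {y | r x y}

/-- A past set: `P = I⁻[P]`. -/
def IsPastSet (r : X → X → Prop) (P : Set X) : Prop := P = pastOf r P

/-- A future set: `F = I⁺[F]`. -/
def IsFutureSet (r : X → X → Prop) (F : Set X) : Prop := F = futureOf r F

/-- An indecomposable past set (IP): a nonempty past set which is not the union of
two proper subsets which are both past sets. -/
def IsIP (r : X → X → Prop) (P : Set X) : Prop :=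
  IsPastSet r P ∧ P.Nonempty ∧
    ¬ ∃ P₁ P₂ : Set X, IsPastSet r P₁ ∧ IsPastSet r P₂ ∧ P₁ ⊂ P ∧ P₂ ⊂ P ∧ P = P₁ ∪ P₂

/-- An indecomposable future set (IF). -/
def IsIF (r : X → X → Prop) (F : Set X) : Prop :=
  IsFutureSet r F ∧ F.Nonempty ∧
    ¬ ∃ F₁ F₂ : Set X, IsFutureSet r F₁ ∧ IsFutureSet r F₂ ∧ F₁ ⊂ F ∧ F₂ ⊂ F ∧ F = F₁ ∪ F₂

/-- `dec(P)`: the set of all maximal IPs (under inclusion) contained in `P`. -/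
def decP (r : X → X → Prop) (P : Set X) : Set (Set X) :=
  {Q | IsIP r Q ∧ Q ⊆ P ∧ ∀ Q' : Set X, IsIP r Q' → Q' ⊆ P → Q ⊆ Q' → Q = Q'}

/-- `dec(F)` for future sets: the set of all maximal IFs contained in `F`. -/
def decF (r : X → X → Prop) (F : Set X) : Set (Set X) :=
  {Q | IsIF r Q ∧ Q ⊆ F ∧ ∀ Q' : Set X, IsIF r Q' → Q' ⊆ F → Q ⊆ Q' → Q = Q'}

/-- Inferior limit of a sequence of sets: `LI(Aₙ) = ∪ₙ ∩_{k ≥ n} A_k`. -/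
def seqLI (A : ℕ → Set X) : Set X := ⋃ n, ⋂ k, ⋂ (_ : n ≤ k), A k

/-- Superior limit of a sequence of sets: `LS(Aₙ) = ∩ₙ ∪_{k ≥ n} A_k`. -/
def seqLS (A : ℕ → Set X) : Set X := ⋂ n, ⋃ k, ⋃ (_ : n ≤ k), A k

/-- The limit operator `L̂`: `P ∈ L̂(σ)` iff `P` is an IP with `P ⊆ LI(I⁻(σₙ))` and
`P` is a maximal IP within `LS(I⁻(σₙ))`. -/
def Lhat (r : X → X → Prop) (σ : ℕ → X) : Set (Set X) :=
  {P | IsIP r P ∧ P ⊆ seqLI (fun n => pastPt r (σ n)) ∧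
    P ⊆ seqLS (fun n => pastPt r (σ n)) ∧
    ∀ P' : Set X, IsIP r P' → P' ⊆ seqLS (fun n => pastPt r (σ n)) → P ⊆ P' → P = P'}

/-- The limit operator `Ľ`, dual to `L̂`. -/
def Lcheck (r : X → X → Prop) (σ : ℕ → X) : Set (Set X) :=
  {F | IsIF r F ∧ F ⊆ seqLI (fun n => futPt r (σ n)) ∧
    F ⊆ seqLS (fun n => futPt r (σ n)) ∧
    ∀ F' : Set X, IsIF r F' → F' ⊆ seqLS (fun n => futPt r (σ n)) → F ⊆ F' → F = F'}

/-- The limit operator `L`: `x ∈ L(σ)` iff `dec(I⁻(x)) ⊆ L̂(σ)` and `dec(I⁺(x)) ⊆ Ľ(σ)`. -/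
def limitOp (r : X → X → Prop) (σ : ℕ → X) : Set X :=
  {x | decP r (pastPt r x) ⊆ Lhat r σ ∧ decF r (futPt r x) ⊆ Lcheck r σ}

/-- A future chain: a sequence with `xₙ ≪ xₙ₊₁`. -/
def IsFutureChain (r : X → X → Prop) (c : ℕ → X) : Prop := ∀ n, r (c n) (c (n + 1))

/-- A past chain: a sequence with `xₙ₊₁ ≪ xₙ`. -/
def IsPastChain (r : X → X → Prop) (c : ℕ → X) : Prop := ∀ n, r (c (n + 1)) (c n)

/-- A (future or past) chain. -/
def IsChronChain (r : X → X → Prop) (c : ℕ → X) : Prop :=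
  IsFutureChain r c ∨ IsPastChain r c

/-- `(X, r)` is a chronological set: `r` is transitive and irreflexive, there are no
isolates, and there is a countable dense subset. -/
def IsChronSet (r : X → X → Prop) : Prop :=
  Transitive r ∧ Irreflexive r ∧ (∀ x : X, ∃ y : X, r x y ∨ r y x) ∧
    ∃ D : Set X, D.Countable ∧ ∀ x y : X, r x y → ∃ d ∈ D, r x d ∧ r d y

/-- Weakly distinguishing: points with the same past and future coincide. -/
def WeaklyDist (r : X → X → Prop) : Prop :=
  ∀ x y : X, pastPt r x = pastPt r y → futPt r x = futPt r y → x = y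

/-- The natural injection `i(x) = (I⁻(x), I⁺(x))` into `X_p × X_f`. -/
def inj (r : X → X → Prop) (x : X) : Set X × Set X := (pastPt r x, futPt r x)

/-- `(P, F) ∈ X_p × X_f` is an endpoint of a future chain `c` if `P = I⁻[c]` and
`dec(F) ⊆ Ľ(c)`; of a past chain if `F = I⁺[c]` and `dec(P) ⊆ L̂(c)`. -/
def IsEndpoint (r : X → X → Prop) (c : ℕ → X) (p : Set X × Set X) : Prop :=
  IsPastSet r p.1 ∧ IsFutureSet r p.2 ∧
    ((IsFutureChain r c ∧ p.1 = pastOf r (Set.range c) ∧ decF r p.2 ⊆ Lcheck r c) ∨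
     (IsPastChain r c ∧ p.2 = futureOf r (Set.range c) ∧ decP r p.1 ⊆ Lhat r c))

/-- `X^end`: the union of `i[X]` with all endpoints of all chains in `X`. -/
def endSet (r : X → X → Prop) : Set (Set X × Set X) :=
  Set.range (inj r) ∪ {p | ∃ c : ℕ → X, IsChronChain r c ∧ IsEndpoint r c p}

/-- A completion of `X`: a set `X̄` with `i[X] ⊆ X̄ ⊆ X^end` such that every chain
in `X` has some endpoint in `X̄`. -/
def IsCompletion (r : X → X → Prop) (Xb : Set (Set X × Set X)) : Prop :=
  Set.range (inj r) ⊆ Xb ∧ Xb ⊆ endSet r ∧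
    ∀ c : ℕ → X, IsChronChain r c → ∃ p ∈ Xb, IsEndpoint r c p

/-- The chronology on pairs: `(P,F) ≪̄ (P',F')` iff `F ∩ P' ≠ ∅`. -/
def llbar (p q : Set X × Set X) : Prop := (p.2 ∩ q.1).Nonempty

/-- The chronology `≪̄` on a completion, viewed on the subtype. -/
def subRel (Xb : Set (Set X × Set X)) (a b : ↥Xb) : Prop := llbar a.1 b.1

/-- The injection of `X` into a completion `X̄` (as a subtype). -/
def iota (r : X → X → Prop) (Xb : Set (Set X × Set X))
    (h : Set.range (inj r) ⊆ Xb) (x : X) : ↥Xb := ⟨inj r x, h ⟨x, rfl⟩⟩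

end CausalBoundary

open CausalBoundary


section AuxStmt0

variable {X : Type*} {r : X → X → Prop} {Q : Set X}

/-- Directed nonempty past set. -/
def DirPast (r : X → X → Prop) (Q : Set X) : Prop :=
  IsPastSet r Q ∧ Q.Nonempty ∧ ∀ a ∈ Q, ∀ b ∈ Q, ∃ z ∈ Q, r a z ∧ r b z

lemma pastOf_past (htr : Transitive r)
    (hd : ∀ x y : X, r x y → ∃ d, r x d ∧ r d y) (S : Set X) :
    IsPastSet r (pastOf r S) := by
  apply Set.Subset.antisymm
  · rintro x ⟨s, hs, hxs⟩
    obtain ⟨d, hxd, hds⟩ := hd x s hxs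
    exact ⟨d, ⟨s, hs, hds⟩, hxd⟩
  · rintro x ⟨y, ⟨s, hs, hys⟩, hxy⟩
    exact ⟨s, hs, htr hxy hys⟩

lemma dirPast_isIP (hQ : DirPast r Q) : IsIP r Q := by
  obtain ⟨hp, hne, hdir⟩ := hQ
  refine ⟨hp, hne, ?_⟩
  rintro ⟨P₁, P₂, h1, h2, ⟨hs1, hns1⟩, ⟨hs2, hns2⟩, hu⟩
  obtain ⟨a, ha, ha1⟩ := Set.not_subset.1 hns1
  obtain ⟨b, hb, hb2⟩ := Set.not_subset.1 hns2
  obtain ⟨z, hz, haz, hbz⟩ := hdir a ha b hb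
  rcases hu ▸ hz with hz1 | hz2
  · exact ha1 (h1 ▸ ⟨z, hz1, haz⟩)
  · exact hb2 (h2 ▸ ⟨z, hz2, hbz⟩)

lemma isIP_dirPast (htr : Transitive r)
    (hd : ∀ x y : X, r x y → ∃ d, r x d ∧ r d y) (hQ : IsIP r Q) : DirPast r Q := by
  obtain ⟨hp, hne, hind⟩ := hQ
  refine ⟨hp, hne, fun x hx y hy => ?_⟩
  by_contra hcon
  push_neg at hcon
  -- common-future sets
  set P₁ : Set X := pastOf r {w ∈ Q | r x w}
  set P₂ : Set X := pastOf r {w ∈ Q | ∀ z ∈ Q, r x z → ¬ r w z}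
  have h1 : IsPastSet r P₁ := pastOf_past htr hd _
  have h2 : IsPastSet r P₂ := pastOf_past htr hd _
  have hsub1 : P₁ ⊆ Q := by
    rintro w ⟨z, ⟨hzQ, _⟩, hwz⟩; exact hp ▸ ⟨z, hzQ, hwz⟩
  have hsub2 : P₂ ⊆ Q := by
    rintro w ⟨z, ⟨hzQ, _⟩, hwz⟩; exact hp ▸ ⟨z, hzQ, hwz⟩
  have hy1 : y ∉ P₁ := by
    rintro ⟨z, ⟨hzQ, hxz⟩, hyz⟩; exact hcon z hzQ hxz hyz
  have hx2 : x ∉ P₂ := by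
    rintro ⟨w, ⟨hwQ, hw⟩, hxw⟩
    obtain ⟨z, hzQ, hwz⟩ := hp ▸ hwQ
    exact hw z hzQ (htr hxw hwz) hwz
  have hcover : Q = P₁ ∪ P₂ := by
    apply Set.Subset.antisymm
    · intro w hw
      obtain ⟨w', hw'Q, hww'⟩ := hp ▸ hw
      by_cases hc : ∃ z ∈ Q, r x z ∧ r w' z
      · obtain ⟨z, hzQ, hxz, hw'z⟩ := hc
        exact Or.inl ⟨z, ⟨hzQ, hxz⟩, htr hww' hw'z⟩
      · push_neg at hc
        exact Or.inr ⟨w', ⟨hw'Q, fun z hz hxz => hc z hz hxz⟩, hww'⟩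
    · exact Set.union_subset hsub1 hsub2
  exact hind ⟨P₁, P₂, h1, h2, ⟨hsub1, fun hh => hy1 (hh hy)⟩,
    ⟨hsub2, fun hh => hx2 (hh hx)⟩, hcover⟩

end AuxStmt0

/-- Prop. 2.2: every nonempty past set in a chronological set is the
union of the maximal IPs contained in it; equivalently every point of `P` lies in some
maximal IP contained in `P`. -/
theorem stmt0 {X : Type*} (r : X → X → Prop) (h : IsChronSet r)
    (P : Set X) (hP : IsPastSet r P) (hne : P.Nonempty) :
    (P = ⋃ Q ∈ decP r P, Q) ∧ (∀ x ∈ P, ∃ Q ∈ decP r P, x ∈ Q) := by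
  obtain ⟨htr, hirr, _, D, _, hdense⟩ := h
  have hd : ∀ x y : X, r x y → ∃ d, r x d ∧ r d y := fun x y hxy => by
    obtain ⟨d, _, h1, h2⟩ := hdense x y hxy; exact ⟨d, h1, h2⟩
  have key : ∀ x ∈ P, ∃ Q ∈ decP r P, x ∈ Q := by
    intro x hx
    -- build a future chain in P above x
    have hstep : ∀ p : X, p ∈ P → ∃ q ∈ P, r p q := fun p hp => hP.subset hp
    choose g hgP hgr using hstep
    obtain ⟨y₀, hy₀P, hxy₀⟩ := hP ▸ hx
    -- chain as a sequence in the subtype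
    let g' : {p // p ∈ P} → {p // p ∈ P} := fun p => ⟨g p.1 p.2, hgP p.1 p.2⟩
    let c : ℕ → {p // p ∈ P} := fun n => g'^[n] ⟨y₀, hy₀P⟩
    have hcsucc : ∀ n, r (c n).1 (c (n + 1)).1 := by
      intro n
      have : c (n + 1) = g' (c n) := Function.iterate_succ_apply' g' n _
      rw [this]
      exact hgr _ _
    have hcmono : ∀ m n, m < n → r (c m).1 (c n).1 := by
      intro m n hmn
      induction n with
      | zero => omega
      | succ k ih =>
        rcases Nat.lt_succ_iff_lt_or_eq.1 hmn with h' | h'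
        · exact htr (ih h') (hcsucc k)
        · rw [h']; exact hcsucc k
    set Q₀ : Set X := pastOf r (Set.range (fun n => (c n).1)) with hQ₀
    have hQ₀P : Q₀ ⊆ P := by
      rintro w ⟨s, ⟨n, rfl⟩, hws⟩
      exact hP ▸ ⟨_, (c n).2, hws⟩
    have hxQ₀ : x ∈ Q₀ := ⟨(c 0).1, ⟨0, rfl⟩, hxy₀⟩
    have hdir₀ : DirPast r Q₀ := by
      refine ⟨pastOf_past htr hd _, ⟨x, hxQ₀⟩, ?_⟩
      rintro a ⟨s, ⟨i, rfl⟩, has⟩ b ⟨t, ⟨j, rfl⟩, hbt⟩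
      refine ⟨(c (max i j + 1)).1, ⟨_, ⟨max i j + 2, rfl⟩, hcsucc _⟩, ?_, ?_⟩
      · exact htr has (hcmono i _ (by omega))
      · exact htr hbt (hcmono j _ (by omega))
    -- Zorn
    set S : Set (Set X) := {Q | DirPast r Q ∧ Q ⊆ P ∧ x ∈ Q} with hS
    have hub : ∀ C ⊆ S, IsChain (· ⊆ ·) C → C.Nonempty → ∃ ub ∈ S, ∀ s ∈ C, s ⊆ ub := by
      intro C hCS hCchain hCne
      refine ⟨⋃₀ C, ⟨⟨?_, ?_, ?_⟩, ?_, ?_⟩, fun s hs => Set.subset_sUnion_of_mem hs⟩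
      · apply Set.Subset.antisymm
        · rintro w ⟨A, hA, hwA⟩
          obtain ⟨s, hsA, hws⟩ := (hCS hA).1.1 ▸ hwA
          exact ⟨s, ⟨A, hA, hsA⟩, hws⟩
        · rintro w ⟨s, ⟨A, hA, hsA⟩, hws⟩
          exact ⟨A, hA, (hCS hA).1.1 ▸ ⟨s, hsA, hws⟩⟩
      · obtain ⟨A, hA⟩ := hCne
        exact ⟨x, A, hA, (hCS hA).2.2⟩
      · rintro a ⟨A, hA, haA⟩ b ⟨B, hB, hbB⟩
        rcases hCchain.total hA hB with hAB | hBA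
        · obtain ⟨z, hz, h1, h2⟩ := (hCS hB).1.2.2 a (hAB haA) b hbB
          exact ⟨z, ⟨B, hB, hz⟩, h1, h2⟩
        · obtain ⟨z, hz, h1, h2⟩ := (hCS hA).1.2.2 a haA b (hBA hbB)
          exact ⟨z, ⟨A, hA, hz⟩, h1, h2⟩
      · exact Set.sUnion_subset fun A hA => (hCS hA).2.1
      · obtain ⟨A, hA⟩ := hCne
        exact ⟨A, hA, (hCS hA).2.2⟩
    obtain ⟨M, hQ₀M, hMS, hMmax⟩ := zorn_subset_nonempty S hub Q₀ ⟨hdir₀, hQ₀P, hxQ₀⟩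
    obtain ⟨hMdir, hMP, hxM⟩ := hMS
    refine ⟨M, ⟨dirPast_isIP hMdir, hMP, ?_⟩, hxM⟩
    intro Q' hQ' hQ'P hMQ'
    have hQ'S : Q' ∈ S := ⟨isIP_dirPast htr hd hQ', hQ'P, hMQ' hxM⟩
    exact Set.Subset.antisymm hMQ' (hMmax hQ'S hMQ')
  refine ⟨?_, key⟩
  apply Set.Subset.antisymm
  · intro x hx
    obtain ⟨Q, hQ, hxQ⟩ := key x hx
    exact Set.mem_biUnion hQ hxQ
  · exact Set.iUnion₂_subset fun Q hQ => hQ.2.1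
end

section
/- Let (X, ≪) be a chronological set and let ς = (xₙ) be a future chain in X. Then I⁻[ς] is a nonempty indecomposable past set (IP). In particular, for every point x of a past set P there is a future chain starting at x contained in P, and its past is an IP contained in P that contains x. -/
open CausalBoundary

lemma chain_mono {X : Type*} {r : X → X → Prop} (htr : Transitive r) {c : ℕ → X}
    (hc : IsFutureChain r c) : ∀ m k : ℕ, m < k → r (c m) (c k) := by
  intro m k hmk
  induction k with
  | zero => omega
  | succ k ih =>
    rcases Nat.lt_succ_iff_lt_or_eq.mp hmk with h | h
    · exact htr (ih h) (hc k)
    · subst h; exact hc m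

lemma pastOf_chain_isIP {X : Type*} {r : X → X → Prop} (h : IsChronSet r)
    (c : ℕ → X) (hc : IsFutureChain r c) : IsIP r (pastOf r (Set.range c)) := by
  obtain ⟨htr, hirr, -, D, -, hD⟩ := h
  set P := pastOf r (Set.range c) with hP
  have hmem : ∀ n, c n ∈ P := fun n => ⟨c (n+1), ⟨n+1, rfl⟩, hc n⟩
  have hpast : IsPastSet r P := by
    apply Set.Subset.antisymm
    · rintro x ⟨s, ⟨n, rfl⟩, hx⟩
      obtain ⟨d, -, hxd, hdn⟩ := hD x (c n) hx
      exact ⟨d, ⟨c n, ⟨n, rfl⟩, hdn⟩, hxd⟩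
    · rintro x ⟨s, ⟨t, ht, hst⟩, hxs⟩
      exact ⟨t, ht, htr hxs hst⟩
  refine ⟨hpast, ⟨c 0, hmem 0⟩, ?_⟩
  rintro ⟨P₁, P₂, hP₁, hP₂, ⟨hsub₁, hne₁⟩, ⟨hsub₂, hne₂⟩, hU⟩
  obtain ⟨a, haP, haP₁⟩ := Set.not_subset.mp hne₁
  obtain ⟨b, hbP, hbP₂⟩ := Set.not_subset.mp hne₂
  obtain ⟨s, ⟨m, rfl⟩, ham⟩ := haP
  obtain ⟨s, ⟨n, rfl⟩, hbn⟩ := hbP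
  set k := max m n + 1 with hk
  have hak : r a (c k) := htr ham (chain_mono htr hc m k (by omega))
  have hbk : r b (c k) := htr hbn (chain_mono htr hc n k (by omega))
  have hckP : c k ∈ P₁ ∪ P₂ := hU ▸ hmem k
  rcases hckP with hck | hck
  · exact haP₁ (hP₁ ▸ ⟨c k, hck, hak⟩)
  · exact hbP₂ (hP₂ ▸ ⟨c k, hck, hbk⟩)

/-- the past of a future chain is a (nonempty) IP; in particular,
for every point `x` of a past set `P` there is a future chain starting at `x`
contained in `P` whose past is an IP contained in `P` that contains `x`. -/
theorem stmt1 {X : Type*} (r : X → X → Prop) (h : IsChronSet r) :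
    (∀ c : ℕ → X, IsFutureChain r c → IsIP r (pastOf r (Set.range c))) ∧
    (∀ P : Set X, IsPastSet r P → ∀ x ∈ P, ∃ c : ℕ → X,
      IsFutureChain r c ∧ c 0 = x ∧ (∀ n, c n ∈ P) ∧
      IsIP r (pastOf r (Set.range c)) ∧ pastOf r (Set.range c) ⊆ P ∧
      x ∈ pastOf r (Set.range c)) := by
  refine ⟨fun c hc => pastOf_chain_isIP h c hc, ?_⟩
  intro P hPset x hx
  have hstep : ∀ y ∈ P, ∃ z, z ∈ P ∧ r y z := by
    intro y hy
    have : y ∈ pastOf r P := hPset ▸ hy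
    obtain ⟨s, hs, hys⟩ := this
    exact ⟨s, hs, hys⟩
  choose f hfP hfr using hstep
  let g : ℕ → {y // y ∈ P} := fun n => Nat.rec ⟨x, hx⟩ (fun _ p => ⟨f p.1 p.2, hfP p.1 p.2⟩) n
  set c : ℕ → X := fun n => (g n).1 with hcdef
  have hchain : IsFutureChain r c := fun n => hfr (g n).1 (g n).2
  have hmemP : ∀ n, c n ∈ P := fun n => (g n).2
  refine ⟨c, hchain, rfl, hmemP, pastOf_chain_isIP h c hchain, ?_, ⟨c 1, ⟨1, rfl⟩, hchain 0⟩⟩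
  rintro y ⟨s, ⟨n, rfl⟩, hys⟩
  exact hPset ▸ (⟨c n, hmemP n, hys⟩ : y ∈ pastOf r P)
end

section
/- Let X be a chronological set, ς = (xₙ) a (future or past) chain in X, and (P, F) a pair consisting of a past set P and a future set F of X. Then (P, F) is generated by ς if and only if there exists a countable dense set D ⊆ X such that P ∩ D = LI(I⁻(xₙ)) ∩ D and F ∩ D = LI(I⁺(xₙ)) ∩ D. -/
namespace CausalBoundary

variable {X : Type*}

/-- `(P, F)` is generated by the chain `c`: `P = I⁻[LI(I⁻(xₙ))]` and `F = I⁺[LI(I⁺(xₙ))]`. -/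
def Generates (r : X → X → Prop) (c : ℕ → X) (p : Set X × Set X) : Prop :=
  p.1 = pastOf r (seqLI fun n => pastPt r (c n)) ∧
  p.2 = futureOf r (seqLI fun n => futPt r (c n))

end CausalBoundary

open CausalBoundary

section Aux

variable {X : Type*} {r : X → X → Prop} {c : ℕ → X}

lemma mem_seqLI {A : ℕ → Set X} {x : X} :
    x ∈ seqLI A ↔ ∃ n, ∀ k, n ≤ k → x ∈ A k := by
  simp [seqLI]

lemma futChain_rel (hTr : Transitive r) (hc : IsFutureChain r c)
    {m k : ℕ} (h : m < k) : r (c m) (c k) := by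
  induction k with
  | zero => omega
  | succ k ih =>
    rcases Nat.lt_succ_iff_lt_or_eq.mp h with h' | h'
    · exact hTr (ih h') (hc k)
    · subst h'; exact hc m

lemma pastChain_rel (hTr : Transitive r) (hc : IsPastChain r c)
    {m k : ℕ} (h : m < k) : r (c k) (c m) := by
  induction k with
  | zero => omega
  | succ k ih =>
    rcases Nat.lt_succ_iff_lt_or_eq.mp h with h' | h'
    · exact hTr (hc k) (ih h')
    · subst h'; exact hc m

lemma pastOf_seqLI_subset (hTr : Transitive r) :
    pastOf r (seqLI fun n => pastPt r (c n)) ⊆ seqLI fun n => pastPt r (c n) := by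
  rintro x ⟨s, hs, hxs⟩
  rw [mem_seqLI] at hs ⊢
  obtain ⟨n, hn⟩ := hs
  exact ⟨n, fun k hk => hTr hxs (hn k hk)⟩

lemma futureOf_seqLI_subset (hTr : Transitive r) :
    futureOf r (seqLI fun n => futPt r (c n)) ⊆ seqLI fun n => futPt r (c n) := by
  rintro x ⟨s, hs, hsx⟩
  rw [mem_seqLI] at hs ⊢
  obtain ⟨n, hn⟩ := hs
  exact ⟨n, fun k hk => hTr (hn k hk) hsx⟩

lemma seqLI_subset_pastOf (hTr : Transitive r) (hc : IsFutureChain r c) :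
    (seqLI fun n => pastPt r (c n)) ⊆ pastOf r (seqLI fun n => pastPt r (c n)) := by
  intro x hx
  rw [mem_seqLI] at hx
  obtain ⟨n, hn⟩ := hx
  refine ⟨c (n + 1), ?_, hn (n + 1) (by omega)⟩
  rw [mem_seqLI]
  exact ⟨n + 2, fun k hk => futChain_rel hTr hc (by omega)⟩

lemma seqLI_subset_futureOf (hTr : Transitive r) (hc : IsPastChain r c) :
    (seqLI fun n => futPt r (c n)) ⊆ futureOf r (seqLI fun n => futPt r (c n)) := by
  intro x hx
  rw [mem_seqLI] at hx
  obtain ⟨n, hn⟩ := hx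
  refine ⟨c (n + 1), ?_, hn (n + 1) (by omega)⟩
  rw [mem_seqLI]
  exact ⟨n + 2, fun k hk => pastChain_rel hTr hc (by omega)⟩

end Aux

/-- Prop. 3.4, (i) ⇔ (ii): `(P,F)` is generated by a chain `ς` iff
there is a countable dense set `D` with `P ∩ D = LI(I⁻(xₙ)) ∩ D` and
`F ∩ D = LI(I⁺(xₙ)) ∩ D`. -/
theorem stmt2 {X : Type*} (r : X → X → Prop) (h : IsChronSet r)
    (c : ℕ → X) (hc : IsChronChain r c) (P F : Set X)
    (hP : IsPastSet r P) (hF : IsFutureSet r F) :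
    Generates r c (P, F) ↔
      ∃ D : Set X, D.Countable ∧ (∀ x y : X, r x y → ∃ d ∈ D, r x d ∧ r d y) ∧
        P ∩ D = seqLI (fun n => pastPt r (c n)) ∩ D ∧
        F ∩ D = seqLI (fun n => futPt r (c n)) ∩ D := by
  obtain ⟨hTr, hIrr, -, D₀, hD₀c, hD₀d⟩ := h
  set LIm := seqLI (fun n => pastPt r (c n)) with hLIm
  set LIp := seqLI (fun n => futPt r (c n)) with hLIp
  constructor
  · rintro ⟨hGP, hGF⟩
    simp only at hGP hGF
    rcases hc with hfc | hpc
    · -- future chain: P = LIm, shrink D₀ to fix F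
      have hPLI : P = LIm := by
        rw [hGP]
        exact Set.Subset.antisymm (pastOf_seqLI_subset hTr) (seqLI_subset_pastOf hTr hfc)
      refine ⟨D₀ \ (LIp \ F), hD₀c.mono Set.diff_subset, ?_, ?_, ?_⟩
      · intro x y hxy
        obtain ⟨d, hdD, hxd, hdy⟩ := hD₀d x y hxy
        by_cases hbad : d ∈ LIp \ F
        · obtain ⟨d', hd'D, hxd', hd'd⟩ := hD₀d x d hxd
          refine ⟨d', ⟨hd'D, fun hb => ?_⟩, hxd', hTr hd'd hdy⟩
          exact hbad.2 (hGF ▸ ⟨d', hb.1, hd'd⟩)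
        · exact ⟨d, ⟨hdD, hbad⟩, hxd, hdy⟩
      · rw [hPLI]
      · ext d
        constructor
        · rintro ⟨hdF, hdD⟩
          exact ⟨futureOf_seqLI_subset hTr (hGF ▸ hdF), hdD⟩
        · rintro ⟨hdLI, hdD⟩
          refine ⟨?_, hdD⟩
          by_contra hdF
          exact hdD.2 ⟨hdLI, hdF⟩
    · -- past chain: F = LIp, shrink D₀ to fix P
      have hFLI : F = LIp := by
        rw [hGF]
        exact Set.Subset.antisymm (futureOf_seqLI_subset hTr) (seqLI_subset_futureOf hTr hpc)
      refine ⟨D₀ \ (LIm \ P), hD₀c.mono Set.diff_subset, ?_, ?_, ?_⟩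
      · intro x y hxy
        obtain ⟨d, hdD, hxd, hdy⟩ := hD₀d x y hxy
        by_cases hbad : d ∈ LIm \ P
        · obtain ⟨d', hd'D, hdd', hd'y⟩ := hD₀d d y hdy
          refine ⟨d', ⟨hd'D, fun hb => ?_⟩, hTr hxd hdd', hd'y⟩
          exact hbad.2 (hGP ▸ ⟨d', hb.1, hdd'⟩)
        · exact ⟨d, ⟨hdD, hbad⟩, hxd, hdy⟩
      · ext d
        constructor
        · rintro ⟨hdP, hdD⟩
          exact ⟨pastOf_seqLI_subset hTr (hGP ▸ hdP), hdD⟩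
        · rintro ⟨hdLI, hdD⟩
          refine ⟨?_, hdD⟩
          by_contra hdP
          exact hdD.2 ⟨hdLI, hdP⟩
      · rw [hFLI]
  · rintro ⟨D, hDc, hDd, hPD, hFD⟩
    constructor
    · -- P = pastOf r LIm
      simp only
      ext x
      constructor
      · intro hx
        obtain ⟨p, hpP, hxp⟩ := (hP ▸ hx : x ∈ pastOf r P)
        obtain ⟨d, hdD, hxd, hdp⟩ := hDd x p hxp
        have hdP : d ∈ P := hP ▸ ⟨p, hpP, hdp⟩
        have hdLI : d ∈ LIm := ((Set.ext_iff.mp hPD d).mp ⟨hdP, hdD⟩).1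
        exact ⟨d, hdLI, hxd⟩
      · rintro ⟨z, hz, hxz⟩
        obtain ⟨d, hdD, hxd, hdz⟩ := hDd x z hxz
        have hdLI : d ∈ LIm := pastOf_seqLI_subset hTr ⟨z, hz, hdz⟩
        have hdP : d ∈ P := ((Set.ext_iff.mp hPD d).mpr ⟨hdLI, hdD⟩).1
        exact hP ▸ ⟨d, hdP, hxd⟩
    · -- F = futureOf r LIp
      simp only
      ext x
      constructor
      · intro hx
        obtain ⟨p, hpF, hpx⟩ := (hF ▸ hx : x ∈ futureOf r F)
        obtain ⟨d, hdD, hpd, hdx⟩ := hDd p x hpx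
        have hdF : d ∈ F := hF ▸ ⟨p, hpF, hpd⟩
        have hdLI : d ∈ LIp := ((Set.ext_iff.mp hFD d).mp ⟨hdF, hdD⟩).1
        exact ⟨d, hdLI, hdx⟩
      · rintro ⟨z, hz, hzx⟩
        obtain ⟨d, hdD, hzd, hdx⟩ := hDd z x hzx
        have hdLI : d ∈ LIp := futureOf_seqLI_subset hTr ⟨z, hz, hzd⟩
        have hdF : d ∈ F := ((Set.ext_iff.mp hFD d).mpr ⟨hdLI, hdD⟩).1
        exact hF ▸ ⟨d, hdF, hdx⟩
end

section
/- Let X be a chronological set, ς = (xₙ) a (future or past) chain in X, and (P, F) a pair consisting of a past set P and a future set F of X. Then (P, F) is generated by ς if and only if L̂(ς) = dec(P) and Ľ(ς) = dec(F). -/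
open CausalBoundary

namespace CausalBoundary

section Lemmas

variable {X : Type*} {r : X → X → Prop}

lemma pastOf_mono {S T : Set X} (h : S ⊆ T) : pastOf r S ⊆ pastOf r T :=
  fun x ⟨s, hs, hxs⟩ => ⟨s, h hs, hxs⟩

lemma IsPastSet.lower {P : Set X} (h : IsPastSet r P) {x p : X} (hxp : r x p) (hp : p ∈ P) :
    x ∈ P := by
  have h' : P = pastOf r P := h
  rw [h']
  exact ⟨p, hp, hxp⟩

lemma isPastSet_pastOf (htr : Transitive r) (hd : ∀ x y, r x y → ∃ d, r x d ∧ r d y)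
    (S : Set X) : IsPastSet r (pastOf r S) := by
  have : pastOf r S = pastOf r (pastOf r S) := by
    ext x
    constructor
    · rintro ⟨s, hs, hxs⟩
      obtain ⟨d, hxd, hds⟩ := hd x s hxs
      exact ⟨d, ⟨s, hs, hds⟩, hxd⟩
    · rintro ⟨z, ⟨s, hs, hzs⟩, hxz⟩
      exact ⟨s, hs, htr hxz hzs⟩
  exact this

lemma mem_seqLI {A : ℕ → Set X} {x : X} : x ∈ seqLI A ↔ ∃ n, ∀ k, n ≤ k → x ∈ A k := by
  simp [seqLI]

lemma mem_seqLS {A : ℕ → Set X} {x : X} : x ∈ seqLS A ↔ ∀ n, ∃ k, n ≤ k ∧ x ∈ A k := by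
  simp [seqLS]

lemma futureChain_rel (htr : Transitive r) {y : ℕ → X} (hy : IsFutureChain r y)
    {n k : ℕ} (h : n < k) : r (y n) (y k) := by
  induction k, h using Nat.le_induction with
  | base => exact hy n
  | succ k _ ih => exact htr ih (hy k)

lemma pastChain_rel (htr : Transitive r) {y : ℕ → X} (hy : IsPastChain r y)
    {n k : ℕ} (h : n < k) : r (y k) (y n) := by
  induction k, h using Nat.le_induction with
  | base => exact hy n
  | succ k _ ih => exact htr (hy k) ih

lemma seqLI_lower (htr : Transitive r) (c : ℕ → X) {x p : X} (hxp : r x p)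
    (hp : p ∈ seqLI (fun n => pastPt r (c n))) : x ∈ seqLI (fun n => pastPt r (c n)) := by
  rw [mem_seqLI] at hp ⊢
  obtain ⟨n, hn⟩ := hp
  exact ⟨n, fun k hk => htr hxp (hn k hk)⟩

lemma seqLS_eq_seqLI (htr : Transitive r) {c : ℕ → X} (hc : IsChronChain r c) :
    seqLS (fun n => pastPt r (c n)) = seqLI (fun n => pastPt r (c n)) := by
  apply Set.Subset.antisymm
  · intro x hx
    rw [mem_seqLS] at hx
    rw [mem_seqLI]
    rcases hc with hf | hp
    · -- future chain: pasts increasing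
      obtain ⟨k, -, hk⟩ := hx 0
      refine ⟨k, fun j hj => ?_⟩
      rcases lt_or_eq_of_le hj with h | h
      · exact htr hk (futureChain_rel htr hf h)
      · exact h ▸ hk
    · -- past chain: pasts decreasing
      refine ⟨0, fun j _ => ?_⟩
      obtain ⟨k, hjk, hk⟩ := hx j
      rcases lt_or_eq_of_le hjk with h | h
      · exact htr hk (pastChain_rel htr hp h)
      · exact h ▸ hk
  · intro x hx
    rw [mem_seqLI] at hx
    rw [mem_seqLS]
    obtain ⟨n, hn⟩ := hx
    intro m
    exact ⟨max n m, le_max_right _ _, hn _ (le_max_left _ _)⟩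

/-- For a chain, `L̂(c) = dec(I⁻[LI(I⁻(cₙ))])`. -/
lemma lhat_eq_decP (htr : Transitive r) {c : ℕ → X} (hc : IsChronChain r c) :
    Lhat r c = decP r (pastOf r (seqLI fun n => pastPt r (c n))) := by
  set L := seqLI fun n => pastPt r (c n) with hLdef
  have hLS : seqLS (fun n => pastPt r (c n)) = L := seqLS_eq_seqLI htr hc
  have hPL : pastOf r L ⊆ L := by
    rintro x ⟨s, hs, hxs⟩
    exact seqLI_lower htr c hxs hs
  have key : ∀ Q : Set X, IsIP r Q → (Q ⊆ L ↔ Q ⊆ pastOf r L) := by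
    intro Q hQ
    constructor
    · intro hsub
      have hQ' : Q = pastOf r Q := hQ.1
      rw [hQ']
      exact pastOf_mono hsub
    · intro hsub
      exact hsub.trans hPL
  ext Q
  simp only [Lhat, decP, Set.mem_setOf_eq, ← hLdef, hLS]
  constructor
  · rintro ⟨hip, hLI, _, hmax⟩
    exact ⟨hip, (key Q hip).1 hLI,
      fun Q' h1 h2 h3 => hmax Q' h1 ((key Q' h1).2 h2) h3⟩
  · rintro ⟨hip, hsub, hmax⟩
    refine ⟨hip, (key Q hip).2 hsub, (key Q hip).2 hsub,
      fun Q' h1 h2 h3 => hmax Q' h1 ((key Q' h1).1 h2) h3⟩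

/-- The past of a future chain is an IP. -/
lemma isIP_iUnion_pastPt (htr : Transitive r) {y : ℕ → X} (hy : IsFutureChain r y) :
    IsIP r (⋃ n, pastPt r (y n)) := by
  set U := ⋃ n, pastPt r (y n) with hU
  have hyU : ∀ n, y n ∈ U := fun n => Set.mem_iUnion.2 ⟨n + 1, hy n⟩
  have hUpast : IsPastSet r U := by
    show U = pastOf r U
    apply Set.Subset.antisymm
    · intro x hx
      obtain ⟨n, hn⟩ := Set.mem_iUnion.1 hx
      exact ⟨y n, hyU n, hn⟩
    · rintro x ⟨s, hs, hxs⟩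
      obtain ⟨n, hn⟩ := Set.mem_iUnion.1 hs
      exact Set.mem_iUnion.2 ⟨n, htr hxs hn⟩
  refine ⟨hUpast, ⟨y 0, hyU 0⟩, ?_⟩
  rintro ⟨P₁, P₂, h₁, h₂, hs₁, hs₂, heq⟩
  -- all yₙ lie in P₁ or all in P₂
  have hall : (∀ n, y n ∈ P₁) ∨ (∀ n, y n ∈ P₂) := by
    by_contra hcon
    push_neg at hcon
    obtain ⟨⟨n, hn⟩, ⟨m, hm⟩⟩ := hcon
    have hstep : ∀ (Pz : Set X), IsPastSet r Pz → ∀ {a b : ℕ}, a ≤ b → y a ∉ Pz → y b ∉ Pz := by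
      intro Pz hPz a b hab ha hb
      rcases lt_or_eq_of_le hab with h | h
      · exact ha (hPz.lower (futureChain_rel htr hy h) hb)
      · exact ha (h ▸ hb)
    have h1 := hstep P₁ h₁ (le_max_left n m) hn
    have h2 := hstep P₂ h₂ (le_max_right n m) hm
    have := hyU (max n m)
    rw [heq] at this
    rcases this with h | h
    · exact h1 h
    · exact h2 h
  rcases hall with hall | hall
  · apply hs₁.ne
    apply Set.Subset.antisymm hs₁.subset
    intro x hx
    obtain ⟨n, hn⟩ := Set.mem_iUnion.1 hx
    exact h₁.lower hn (hall n)
  · apply hs₂.ne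
    apply Set.Subset.antisymm hs₂.subset
    intro x hx
    obtain ⟨n, hn⟩ := Set.mem_iUnion.1 hx
    exact h₂.lower hn (hall n)

/-- The union of a nonempty chain of IPs is an IP. -/
lemma isIP_sUnion_chain (htr : Transitive r) (hd : ∀ x y, r x y → ∃ d, r x d ∧ r d y)
    {C : Set (Set X)} (hC : ∀ Q ∈ C, IsIP r Q) (hch : IsChain (· ⊆ ·) C)
    (hne : C.Nonempty) : IsIP r (⋃₀ C) := by
  have hUpast : IsPastSet r (⋃₀ C) := by
    show ⋃₀ C = pastOf r (⋃₀ C)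
    apply Set.Subset.antisymm
    · rintro x ⟨Q, hQ, hx⟩
      have hQ' : Q = pastOf r Q := (hC Q hQ).1
      rw [hQ'] at hx
      obtain ⟨s, hs, hxs⟩ := hx
      exact ⟨s, ⟨Q, hQ, hs⟩, hxs⟩
    · rintro x ⟨s, ⟨Q, hQ, hs⟩, hxs⟩
      exact ⟨Q, hQ, (hC Q hQ).1.lower hxs hs⟩
  obtain ⟨Q₀, hQ₀⟩ := hne
  obtain ⟨z, hz⟩ := (hC Q₀ hQ₀).2.1
  refine ⟨hUpast, ⟨z, Q₀, hQ₀, hz⟩, ?_⟩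
  rintro ⟨P₁, P₂, h₁, h₂, hs₁, hs₂, heq⟩
  obtain ⟨a, ha, haP₁⟩ := Set.exists_of_ssubset hs₁
  obtain ⟨b, hb, hbP₂⟩ := Set.exists_of_ssubset hs₂
  obtain ⟨Qa, hQa, haQ⟩ := ha
  obtain ⟨Qb, hQb, hbQ⟩ := hb
  -- take the bigger of Qa, Qb
  obtain ⟨Q, hQC, haQ', hbQ'⟩ : ∃ Q ∈ C, a ∈ Q ∧ b ∈ Q := by
    rcases eq_or_ne Qa Qb with h | h
    · exact ⟨Qa, hQa, haQ, h ▸ hbQ⟩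
    · rcases hch hQa hQb h with h | h
      · exact ⟨Qb, hQb, h haQ, hbQ⟩
      · exact ⟨Qa, hQa, haQ, h hbQ⟩
  have hQip := hC Q hQC
  have hQU : Q ⊆ ⋃₀ C := fun x hx => ⟨Q, hQC, hx⟩
  apply hQip.2.2
  refine ⟨pastOf r (Q ∩ P₁), pastOf r (Q ∩ P₂),
    isPastSet_pastOf htr hd _, isPastSet_pastOf htr hd _, ?_, ?_, ?_⟩
  · constructor
    · rintro x ⟨s, ⟨hsQ, _⟩, hxs⟩
      exact hQip.1.lower hxs hsQ
    · intro hcontra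
      have : a ∈ pastOf r (Q ∩ P₁) := hcontra haQ'
      obtain ⟨s, ⟨_, hsP₁⟩, hxs⟩ := this
      exact haP₁ (h₁.lower hxs hsP₁)
  · constructor
    · rintro x ⟨s, ⟨hsQ, _⟩, hxs⟩
      exact hQip.1.lower hxs hsQ
    · intro hcontra
      have : b ∈ pastOf r (Q ∩ P₂) := hcontra hbQ'
      obtain ⟨s, ⟨_, hsP₂⟩, hxs⟩ := this
      exact hbP₂ (h₂.lower hxs hsP₂)
  · apply Set.Subset.antisymm
    · intro x hx
      have hx' : x ∈ pastOf r Q := by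
        have h' : Q = pastOf r Q := hQip.1
        rwa [← h']
      obtain ⟨q, hq, hxq⟩ := hx'
      have hqU : q ∈ P₁ ∪ P₂ := by rw [← heq]; exact hQU hq
      rcases hqU with h | h
      · exact Or.inl ⟨q, ⟨hq, h⟩, hxq⟩
      · exact Or.inr ⟨q, ⟨hq, h⟩, hxq⟩
    · rintro x (⟨s, ⟨hsQ, _⟩, hxs⟩ | ⟨s, ⟨hsQ, _⟩, hxs⟩) <;>
        exact hQip.1.lower hxs hsQ

/-- Every point of a past set lies in some maximal IP of the past set. -/
lemma exists_mem_decP (htr : Transitive r) (hd : ∀ x y, r x y → ∃ d, r x d ∧ r d y)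
    {P : Set X} (hP : IsPastSet r P) {x : X} (hx : x ∈ P) : ∃ Q ∈ decP r P, x ∈ Q := by
  classical
  -- build a future chain in P above x
  have step : ∀ z, z ∈ P → ∃ w, w ∈ P ∧ r z w := by
    intro z hz
    have h' : P = pastOf r P := hP
    rw [h'] at hz
    obtain ⟨w, hw, hzw⟩ := hz
    exact ⟨w, hw, hzw⟩
  let g : X → X := fun z => if h : z ∈ P then Classical.choose (step z h) else z
  have hg : ∀ z (hz : z ∈ P), g z ∈ P ∧ r z (g z) := by
    intro z hz
    simp only [g, dif_pos hz]
    exact Classical.choose_spec (step z hz)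
  let y : ℕ → X := fun n => g^[n + 1] x
  have hyP : ∀ n, y n ∈ P := by
    intro n
    induction n with
    | zero => exact (hg x hx).1
    | succ n ih =>
      have : y (n + 1) = g (y n) := Function.iterate_succ_apply' g (n + 1) x
      rw [this]
      exact (hg _ ih).1
  have hych : IsFutureChain r y := by
    intro n
    have : y (n + 1) = g (y n) := Function.iterate_succ_apply' g (n + 1) x
    rw [this]
    exact (hg _ (hyP n)).2
  have hxy0 : r x (y 0) := (hg x hx).2
  set Q₀ := ⋃ n, pastPt r (y n) with hQ₀def
  have hQ₀ip : IsIP r Q₀ := isIP_iUnion_pastPt htr hych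
  have hxQ₀ : x ∈ Q₀ := Set.mem_iUnion.2 ⟨0, hxy0⟩
  have hQ₀P : Q₀ ⊆ P := by
    intro z hz
    obtain ⟨n, hn⟩ := Set.mem_iUnion.1 hz
    exact hP.lower hn (hyP n)
  -- Zorn
  obtain ⟨m, hQ₀m, hmax⟩ :=
    zorn_subset_nonempty {Q : Set X | IsIP r Q ∧ Q ⊆ P}
      (fun C hCS hch hne =>
        ⟨⋃₀ C, ⟨isIP_sUnion_chain htr hd (fun Q hQ => (hCS hQ).1) hch hne,
          Set.sUnion_subset fun Q hQ => (hCS hQ).2⟩,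
          fun s hs => Set.subset_sUnion_of_mem hs⟩)
      Q₀ ⟨hQ₀ip, hQ₀P⟩
  exact ⟨m, ⟨hmax.1.1, hmax.1.2,
    fun Q' h1 h2 h3 => Set.Subset.antisymm h3 (hmax.2 ⟨h1, h2⟩ h3)⟩, hQ₀m hxQ₀⟩

lemma pastSet_eq_sUnion_decP (htr : Transitive r) (hd : ∀ x y, r x y → ∃ d, r x d ∧ r d y)
    {P : Set X} (hP : IsPastSet r P) : P = ⋃₀ decP r P := by
  apply Set.Subset.antisymm
  · intro x hx
    obtain ⟨Q, hQ, hxQ⟩ := exists_mem_decP htr hd hP hx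
    exact ⟨Q, hQ, hxQ⟩
  · rintro x ⟨Q, hQ, hxQ⟩
    exact hQ.2.1 hxQ

end Lemmas

end CausalBoundary

/-- Prop. 3.4, (i) ⇔ (iii): `(P,F)` is generated by a chain `ς` iff
`L̂(ς) = dec(P)` and `Ľ(ς) = dec(F)`. -/
theorem stmt3 {X : Type*} (r : X → X → Prop) (h : IsChronSet r)
    (c : ℕ → X) (hc : IsChronChain r c) (P F : Set X)
    (hP : IsPastSet r P) (hF : IsFutureSet r F) :
    Generates r c (P, F) ↔ (Lhat r c = decP r P ∧ Lcheck r c = decF r F) := by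
  obtain ⟨htr, -, -, D, -, hDd⟩ := h
  have hd : ∀ x y, r x y → ∃ d, r x d ∧ r d y := by
    intro x y hxy
    obtain ⟨d, -, h1, h2⟩ := hDd x y hxy
    exact ⟨d, h1, h2⟩
  have htr' : Transitive (flip r) := fun a b c hab hbc => htr hbc hab
  have hd' : ∀ x y, flip r x y → ∃ d, flip r x d ∧ flip r d y := by
    intro x y hxy
    obtain ⟨d, h1, h2⟩ := hd y x hxy
    exact ⟨d, h2, h1⟩
  have hc' : IsChronChain (flip r) c := hc.elim Or.inr Or.inl
  have hL : Lhat r c = decP r (pastOf r (seqLI fun n => pastPt r (c n))) :=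
    lhat_eq_decP htr hc
  have hL' : Lcheck r c = decF r (futureOf r (seqLI fun n => futPt r (c n))) :=
    lhat_eq_decP htr' hc'
  have hP0 : IsPastSet r (pastOf r (seqLI fun n => pastPt r (c n))) :=
    isPastSet_pastOf htr hd _
  have hF0 : IsPastSet (flip r) (futureOf r (seqLI fun n => futPt r (c n))) :=
    isPastSet_pastOf htr' hd' _
  constructor
  · rintro ⟨h1, h2⟩
    simp only [Generates] at h1 h2
    rw [h1, h2]
    exact ⟨hL, hL'⟩
  · rintro ⟨h1, h2⟩
    have e1 : decP r P = decP r (pastOf r (seqLI fun n => pastPt r (c n))) :=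
      h1.symm.trans hL
    have e2 : decF r F = decF r (futureOf r (seqLI fun n => futPt r (c n))) :=
      h2.symm.trans hL'
    constructor
    · show P = pastOf r (seqLI fun n => pastPt r (c n))
      calc P = ⋃₀ decP r P := pastSet_eq_sUnion_decP htr hd hP
        _ = ⋃₀ decP r (pastOf r (seqLI fun n => pastPt r (c n))) := by rw [e1]
        _ = pastOf r (seqLI fun n => pastPt r (c n)) :=
          (pastSet_eq_sUnion_decP htr hd hP0).symm
    · show F = futureOf r (seqLI fun n => futPt r (c n))
      calc F = ⋃₀ decP (flip r) F := pastSet_eq_sUnion_decP htr' hd' hF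
        _ = ⋃₀ decP (flip r) (futureOf r (seqLI fun n => futPt r (c n))) := by
            exact congrArg _ e2
        _ = futureOf r (seqLI fun n => futPt r (c n)) :=
          (pastSet_eq_sUnion_decP htr' hd' hF0).symm
end

section
/- Let (X, ≪) be a weakly distinguishing chronological set and X̄ any completion of X with the relation (P,F) ≪̄ (P',F') iff F ∩ P' ≠ ∅. Then i chronologically embeds X into X̄ with chronologically dense image: for all x, x' ∈ X one has x ≪ x' if and only if i(x) ≪̄ i(x'), and whenever (P,F) ≪̄ (P',F') in X̄ there exists x ∈ X with (P,F) ≪̄ i(x) ≪̄ (P',F'). -/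
open CausalBoundary

lemma futPt_futureSet {X : Type*} {r : X → X → Prop} (h : IsChronSet r) (y : X) :
    IsFutureSet r (futPt r y) := by
  obtain ⟨htr, _, _, D, _, hD⟩ := h
  ext x
  constructor
  · intro hx
    obtain ⟨d, _, hyd, hdx⟩ := hD y x hx
    exact ⟨d, hyd, hdx⟩
  · rintro ⟨s, hs, hsx⟩
    exact htr hs hsx

lemma pastPt_pastSet {X : Type*} {r : X → X → Prop} (h : IsChronSet r) (y : X) :
    IsPastSet r (pastPt r y) := by
  obtain ⟨htr, _, _, D, _, hD⟩ := h
  ext x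
  constructor
  · intro hx
    obtain ⟨d, _, hxd, hdy⟩ := hD x y hx
    exact ⟨d, hdy, hxd⟩
  · rintro ⟨s, hs, hxs⟩
    exact htr hxs hs

lemma mem_endSet_sets {X : Type*} {r : X → X → Prop} (h : IsChronSet r)
    {p : Set X × Set X} (hp : p ∈ endSet r) :
    IsPastSet r p.1 ∧ IsFutureSet r p.2 := by
  rcases hp with ⟨x, rfl⟩ | ⟨c, _, hP, hF, _⟩
  · exact ⟨pastPt_pastSet h x, futPt_futureSet h x⟩
  · exact ⟨hP, hF⟩

/-- part of Thm. 4.2: `i` chronologically embeds `X` into any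
completion `X̄` with chronologically dense image. -/
theorem stmt5 {X : Type*} (r : X → X → Prop) (h : IsChronSet r) (hw : WeaklyDist r)
    (Xb : Set (Set X × Set X)) (hc : IsCompletion r Xb) :
    (∀ x x' : X, r x x' ↔ llbar (inj r x) (inj r x')) ∧
    (∀ p q : Set X × Set X, p ∈ Xb → q ∈ Xb → llbar p q →
      ∃ x : X, llbar p (inj r x) ∧ llbar (inj r x) q) := by
  obtain ⟨hinj, hsub, _⟩ := hc
  obtain ⟨htr, _, _, D, _, hD⟩ := id h
  constructor
  · intro x x'
    constructor
    · intro hxx'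
      obtain ⟨d, _, hxd, hdx'⟩ := hD x x' hxx'
      exact ⟨d, hxd, hdx'⟩
    · rintro ⟨y, hy1, hy2⟩
      exact htr hy1 hy2
  · intro p q hp hq ⟨x, hxF, hxP⟩
    obtain ⟨-, hFp⟩ := mem_endSet_sets h (hsub hp)
    obtain ⟨hPq, -⟩ := mem_endSet_sets h (hsub hq)
    rw [hFp] at hxF
    obtain ⟨s, hs, hsx⟩ := hxF
    rw [hPq] at hxP
    obtain ⟨t, ht, hxt⟩ := hxP
    exact ⟨x, ⟨s, hs, hsx⟩, ⟨t, hxt, ht⟩⟩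
end

section
/- Let (X, ≪) be a weakly distinguishing chronological set and X̄ any completion of X with the relation (P,F) ≪̄ (P',F') iff F ∩ P' ≠ ∅. Then for every (P,F) ∈ X̄: i⁻¹[I⁻((P,F)) ∩ i[X]] = P and i⁻¹[I⁺((P,F)) ∩ i[X]] = F, where I⁻ and I⁺ are computed with respect to ≪̄ in X̄. -/
open CausalBoundary

/-- Thm. 4.3, eq. (4): for every `(P,F) ∈ X̄`,
`i⁻¹[I⁻((P,F)) ∩ i[X]] = P` and `i⁻¹[I⁺((P,F)) ∩ i[X]] = F`, where the pasts and
futures are computed with `≪̄` in `X̄`. -/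
theorem stmt6 {X : Type*} (r : X → X → Prop) (h : IsChronSet r) (hw : WeaklyDist r)
    (Xb : Set (Set X × Set X)) (hc : IsCompletion r Xb)
    (P F : Set X) (hmem : (P, F) ∈ Xb) :
    {x : X | inj r x ∈ Xb ∧ llbar (inj r x) (P, F)} = P ∧
    {x : X | inj r x ∈ Xb ∧ llbar (P, F) (inj r x)} = F := by
  obtain ⟨htrans, hirr, -, D, -, hdense⟩ := h
  have hPF : IsPastSet r P ∧ IsFutureSet r F := by
    rcases hc.2.1 hmem with ⟨z, hz⟩ | ⟨c, -, hPset, hFset, -⟩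
    · have hP : P = pastPt r z := congrArg Prod.fst hz.symm
      have hF : F = futPt r z := congrArg Prod.snd hz.symm
      subst hP hF
      constructor
      · ext x
        constructor
        · intro hx
          obtain ⟨d, -, hxd, hdz⟩ := hdense x z hx
          exact ⟨d, hdz, hxd⟩
        · rintro ⟨s, hs, hxs⟩
          exact htrans hxs hs
      · ext x
        constructor
        · intro hx
          obtain ⟨d, -, hzd, hdx⟩ := hdense z x hx
          exact ⟨d, hzd, hdx⟩
        · rintro ⟨s, hs, hsx⟩
          exact htrans hs hsx
    · exact ⟨hPset, hFset⟩
  obtain ⟨hP, hF⟩ := hPF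
  constructor
  · ext x
    simp only [Set.mem_setOf_eq, llbar]
    constructor
    · rintro ⟨-, y, hy1, hy2⟩
      rw [hP]
      exact ⟨y, hy2, hy1⟩
    · intro hx
      refine ⟨hc.1 ⟨x, rfl⟩, ?_⟩
      rw [hP] at hx
      obtain ⟨s, hs, hxs⟩ := hx
      exact ⟨s, hxs, hs⟩
  · ext x
    simp only [Set.mem_setOf_eq, llbar]
    constructor
    · rintro ⟨-, y, hy1, hy2⟩
      rw [hF]
      exact ⟨y, hy1, hy2⟩
    · intro hx
      refine ⟨hc.1 ⟨x, rfl⟩, ?_⟩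
      rw [hF] at hx
      obtain ⟨s, hs, hsx⟩ := hx
      exact ⟨s, hs, hsx⟩
end

section
/- Let (X, ≪) be a weakly distinguishing chronological set and X̄ any completion of X with the relation (P,F) ≪̄ (P',F') iff F ∩ P' ≠ ∅. Then (X̄, ≪̄) is weakly distinguishing: if two elements (P,F), (P',F') ∈ X̄ satisfy I⁻((P,F)) = I⁻((P',F')) and I⁺((P,F)) = I⁺((P',F')) (computed with ≪̄ in X̄), then (P,F) = (P',F'). -/
open CausalBoundary

/-- Thm. 4.3, second part: any completion `(X̄, ≪̄)` of a weakly
distinguishing chronological set is weakly distinguishing: two elements of `X̄` with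
the same past and future in `X̄` coincide. -/
theorem stmt7 {X : Type*} (r : X → X → Prop) (h : IsChronSet r) (hw : WeaklyDist r)
    (Xb : Set (Set X × Set X)) (hc : IsCompletion r Xb)
    (P F P' F' : Set X) (hp : (P, F) ∈ Xb) (hq : (P', F') ∈ Xb)
    (hpast : {q ∈ Xb | llbar q (P, F)} = {q ∈ Xb | llbar q (P', F')})
    (hfut : {q ∈ Xb | llbar (P, F) q} = {q ∈ Xb | llbar (P', F') q}) :
    (P, F) = (P', F') := by
  obtain ⟨htr, hirr, hser, D, hD, hdense⟩ := h
  obtain ⟨hinj, hsub, -⟩ := hc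
  have key : ∀ p ∈ Xb, IsPastSet r p.1 ∧ IsFutureSet r p.2 := by
    intro p hpXb
    rcases hsub hpXb with ⟨x, rfl⟩ | ⟨c, -, h1, h2, -⟩
    · constructor
      · ext z
        constructor
        · intro hz
          obtain ⟨d, -, hd1, hd2⟩ := hdense z x hz
          exact ⟨d, hd2, hd1⟩
        · rintro ⟨s, hs1, hs2⟩
          exact htr hs2 hs1
      · ext z
        constructor
        · intro hz
          obtain ⟨d, -, hd1, hd2⟩ := hdense x z hz
          exact ⟨d, hd1, hd2⟩
        · rintro ⟨s, hs1, hs2⟩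
          exact htr hs1 hs2
    · exact ⟨h1, h2⟩
  have hP : IsPastSet r P := (key _ hp).1
  have hF : IsFutureSet r F := (key _ hp).2
  have hP' : IsPastSet r P' := (key _ hq).1
  have hF' : IsFutureSet r F' := (key _ hq).2
  have hPP' : P = P' := by
    ext x
    have hx : inj r x ∈ Xb := hinj ⟨x, rfl⟩
    constructor
    · intro hxP
      obtain ⟨s, hs, hrs⟩ := hP ▸ hxP
      have h1 : inj r x ∈ {q ∈ Xb | llbar q (P, F)} := ⟨hx, ⟨s, hrs, hs⟩⟩
      rw [hpast] at h1
      obtain ⟨s', hs'1, hs'2⟩ := h1.2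
      rw [hP']
      exact ⟨s', hs'2, hs'1⟩
    · intro hxP
      obtain ⟨s, hs, hrs⟩ := hP' ▸ hxP
      have h1 : inj r x ∈ {q ∈ Xb | llbar q (P', F')} := ⟨hx, ⟨s, hrs, hs⟩⟩
      rw [← hpast] at h1
      obtain ⟨s', hs'1, hs'2⟩ := h1.2
      rw [hP]
      exact ⟨s', hs'2, hs'1⟩
  have hFF' : F = F' := by
    ext x
    have hx : inj r x ∈ Xb := hinj ⟨x, rfl⟩
    constructor
    · intro hxF
      obtain ⟨s, hs, hrs⟩ := hF ▸ hxF
      have h1 : inj r x ∈ {q ∈ Xb | llbar (P, F) q} := ⟨hx, ⟨s, hs, hrs⟩⟩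
      rw [hfut] at h1
      obtain ⟨s', hs'1, hs'2⟩ := h1.2
      rw [hF']
      exact ⟨s', hs'1, hs'2⟩
    · intro hxF
      obtain ⟨s, hs, hrs⟩ := hF' ▸ hxF
      have h1 : inj r x ∈ {q ∈ Xb | llbar (P', F') q} := ⟨hx, ⟨s, hs, hrs⟩⟩
      rw [← hfut] at h1
      obtain ⟨s', hs'1, hs'2⟩ := h1.2
      rw [hF]
      exact ⟨s', hs'1, hs'2⟩
  rw [hPP', hFF']
end

section
/- Let X̄ be a completion of a weakly distinguishing chronological set (X, ≪), viewed as the chronological set (X̄, ≪̄). Then for every (future or past) chain ς in X̄ there exists a chain δ in X such that the chain i[δ] = (i(x_i)) in X̄ and ς have exactly the same endpoints (as pairs of past and future sets of the chronological set X̄). -/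
open CausalBoundary

namespace Stmt10Aux

open CausalBoundary

variable {X : Type*} {r : X → X → Prop}

/-- Density condition extracted from a chronological set. -/
def Dense' (r : X → X → Prop) : Prop := ∀ x y, r x y → ∃ d, r x d ∧ r d y

lemma chronSet_dense (h : IsChronSet r) : Dense' r := by
  obtain ⟨-, -, -, D, -, hd⟩ := h
  intro x y hxy
  obtain ⟨d, -, hd2⟩ := hd x y hxy
  exact ⟨d, hd2⟩

lemma futureOf_isFutureSet (htr : Transitive r) (hd : Dense' r) (S : Set X) :
    IsFutureSet r (futureOf r S) := by
  apply Set.Subset.antisymm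
  · rintro x ⟨s, hs, hsx⟩
    obtain ⟨e, hse, hex⟩ := hd s x hsx
    exact ⟨e, ⟨s, hs, hse⟩, hex⟩
  · rintro x ⟨t, ⟨s, hs, hst⟩, htx⟩
    exact ⟨s, hs, htr hst htx⟩

lemma mem_of_futureSet {F : Set X} (hF : IsFutureSet r F) {y : X} (hy : y ∈ F) :
    ∃ s ∈ F, r s y := by
  have hF' : F = futureOf r F := hF
  rw [hF'] at hy; exact hy

lemma up_of_futureSet {F : Set X} (hF : IsFutureSet r F) {s y : X} (hs : s ∈ F)
    (hsy : r s y) : y ∈ F := by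
  have hF' : F = futureOf r F := hF
  rw [hF']; exact ⟨s, hs, hsy⟩

lemma isIF_of_directed {F : Set X} (hF : IsFutureSet r F) (hne : F.Nonempty)
    (hdir : ∀ x ∈ F, ∀ y ∈ F, ∃ z ∈ F, r z x ∧ r z y) : IsIF r F := by
  refine ⟨hF, hne, ?_⟩
  rintro ⟨F₁, F₂, h₁, h₂, hs₁, hs₂, he⟩
  obtain ⟨x, hxF, hx1⟩ := Set.exists_of_ssubset hs₁
  obtain ⟨y, hyF, hy2⟩ := Set.exists_of_ssubset hs₂
  obtain ⟨z, hzF, hzx, hzy⟩ := hdir x hxF y hyF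
  have hz : z ∈ F₁ ∪ F₂ := he ▸ hzF
  rcases hz with hz | hz
  · exact hx1 (up_of_futureSet h₁ hz hzx)
  · exact hy2 (up_of_futureSet h₂ hz hzy)

lemma directed_of_isIF (htr : Transitive r) (hd : Dense' r) {F : Set X}
    (h : IsIF r F) : ∀ x ∈ F, ∀ y ∈ F, ∃ z ∈ F, r z x ∧ r z y := by
  obtain ⟨hF, hne, hind⟩ := h
  intro x hx y hy
  by_contra hcon
  push_neg at hcon
  apply hind
  have hsub1 : futureOf r (pastPt r x ∩ F) ⊆ F := by
    rintro w ⟨s, ⟨-, hsF⟩, hsw⟩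
    exact up_of_futureSet hF hsF hsw
  have hsub2 : futureOf r (F \ pastPt r x) ⊆ F := by
    rintro w ⟨s, ⟨hsF, -⟩, hsw⟩
    exact up_of_futureSet hF hsF hsw
  have hxmem : x ∈ futureOf r (pastPt r x ∩ F) := by
    obtain ⟨s, hsF, hsx⟩ := mem_of_futureSet hF hx
    exact ⟨s, ⟨hsx, hsF⟩, hsx⟩
  have hynmem : y ∉ futureOf r (pastPt r x ∩ F) := by
    rintro ⟨s, ⟨hsx, hsF⟩, hsy⟩
    exact hcon s hsF hsx hsy
  have hymem : y ∈ futureOf r (F \ pastPt r x) := by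
    obtain ⟨s, hsF, hsy⟩ := mem_of_futureSet hF hy
    by_cases hsx : r s x
    · exact absurd hsy (hcon s hsF hsx)
    · exact ⟨s, ⟨hsF, hsx⟩, hsy⟩
  have hxnmem : x ∉ futureOf r (F \ pastPt r x) := by
    rintro ⟨s, ⟨-, hsnx⟩, hsx⟩
    exact hsnx hsx
  refine ⟨futureOf r (pastPt r x ∩ F), futureOf r (F \ pastPt r x),
    futureOf_isFutureSet htr hd _, futureOf_isFutureSet htr hd _,
    (Set.ssubset_iff_of_subset hsub1).2 ⟨y, hy, hynmem⟩,
    (Set.ssubset_iff_of_subset hsub2).2 ⟨x, hx, hxnmem⟩, ?_⟩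
  apply Set.Subset.antisymm
  · intro w hw
    obtain ⟨s, hsF, hsw⟩ := mem_of_futureSet hF hw
    by_cases hsx : r s x
    · exact Or.inl ⟨s, ⟨hsx, hsF⟩, hsw⟩
    · exact Or.inr ⟨s, ⟨hsF, hsx⟩, hsw⟩
  · exact Set.union_subset hsub1 hsub2

lemma futureChain_lt (htr : Transitive r) {c : ℕ → X} (hfc : IsFutureChain r c)
    {k m : ℕ} (h : k < m) : r (c k) (c m) := by
  induction m with
  | zero => omega
  | succ m ih =>
    rcases Nat.lt_succ_iff_lt_or_eq.mp h with h' | h'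
    · exact htr (ih h') (hfc m)
    · subst h'; exact hfc k

lemma pastChain_lt (htr : Transitive r) {c : ℕ → X} (hpc : IsPastChain r c)
    {k m : ℕ} (h : k < m) : r (c m) (c k) := by
  induction m with
  | zero => omega
  | succ m ih =>
    rcases Nat.lt_succ_iff_lt_or_eq.mp h with h' | h'
    · exact htr (hpc m) (ih h')
    · subst h'; exact hpc k

/-- Every element of a future set has an element of a maximal IF of the set
strictly below it. -/
lemma exists_decF (htr : Transitive r) (hd : Dense' r) {F : Set X}
    (hF : IsFutureSet r F) {y : X} (hy : y ∈ F) :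
    ∃ Q ∈ decF r F, ∃ y' ∈ Q, r y' y := by
  classical
  have step : ∀ z : F, ∃ w : F, r w.1 z.1 := by
    rintro ⟨z, hz⟩
    obtain ⟨s, hs, hsz⟩ := mem_of_futureSet hF hz
    exact ⟨⟨s, hs⟩, hsz⟩
  choose f hf using step
  set c : ℕ → X := fun n => ((f^[n] ⟨y, hy⟩ : F) : X) with hc
  have hc0 : c 0 = y := rfl
  have hcF : ∀ n, c n ∈ F := fun n => (f^[n] ⟨y, hy⟩).2
  have hpc : IsPastChain r c := by
    intro n
    have hiter : f^[n + 1] ⟨y, hy⟩ = f (f^[n] ⟨y, hy⟩) :=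
      Function.iterate_succ_apply' f n ⟨y, hy⟩
    show r ((f^[n+1] ⟨y, hy⟩ : F) : X) ((f^[n] ⟨y, hy⟩ : F) : X)
    rw [hiter]
    exact hf _
  set Q₀ : Set X := futureOf r (Set.range c) with hQ₀
  have hQ₀F : Q₀ ⊆ F := by
    rintro w ⟨s, ⟨n, rfl⟩, hsw⟩
    exact up_of_futureSet hF (hcF n) hsw
  have hc1Q₀ : c 1 ∈ Q₀ := ⟨c 2, ⟨2, rfl⟩, hpc 1⟩
  have hdir : ∀ u ∈ Q₀, ∀ v ∈ Q₀, ∃ z ∈ Q₀, r z u ∧ r z v := by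
    rintro u ⟨s, ⟨k, rfl⟩, hku⟩ v ⟨t, ⟨l, rfl⟩, hlv⟩
    refine ⟨c (max k l + 1), ⟨c (max k l + 2), ⟨max k l + 2, rfl⟩, hpc _⟩, ?_, ?_⟩
    · exact htr (pastChain_lt htr hpc (Nat.lt_succ_of_le (le_max_left k l))) hku
    · exact htr (pastChain_lt htr hpc (Nat.lt_succ_of_le (le_max_right k l))) hlv
  have hQ₀IF : IsIF r Q₀ :=
    isIF_of_directed (futureOf_isFutureSet htr hd _) ⟨c 1, hc1Q₀⟩ hdir
  -- Zorn's lemma for a maximal IF inside F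
  have hzorn : ∀ ch ⊆ {Q : Set X | IsIF r Q ∧ Q ⊆ F}, IsChain (· ⊆ ·) ch →
      ch.Nonempty → ∃ ub ∈ {Q : Set X | IsIF r Q ∧ Q ⊆ F}, ∀ s ∈ ch, s ⊆ ub := by
    intro ch hchS hchain hchne
    refine ⟨⋃₀ ch, ⟨?_, ?_⟩, fun s hs => Set.subset_sUnion_of_mem hs⟩
    · refine isIF_of_directed ?_ ?_ ?_
      · apply Set.Subset.antisymm
        · rintro w ⟨Q, hQch, hwQ⟩
          obtain ⟨s, hs, hsw⟩ := mem_of_futureSet (hchS hQch).1.1 hwQ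
          exact ⟨s, ⟨Q, hQch, hs⟩, hsw⟩
        · rintro w ⟨s, ⟨Q, hQch, hsQ⟩, hsw⟩
          exact ⟨Q, hQch, up_of_futureSet (hchS hQch).1.1 hsQ hsw⟩
      · obtain ⟨Q, hQch⟩ := hchne
        obtain ⟨w, hw⟩ := (hchS hQch).1.2.1
        exact ⟨w, Q, hQch, hw⟩
      · rintro u ⟨Qu, hQu, huQ⟩ v ⟨Qv, hQv, hvQ⟩
        rcases hchain.total hQu hQv with hle | hle
        · obtain ⟨z, hz, hzu, hzv⟩ :=
            directed_of_isIF htr hd (hchS hQv).1 u (hle huQ) v hvQ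
          exact ⟨z, ⟨Qv, hQv, hz⟩, hzu, hzv⟩
        · obtain ⟨z, hz, hzu, hzv⟩ :=
            directed_of_isIF htr hd (hchS hQu).1 u huQ v (hle hvQ)
          exact ⟨z, ⟨Qu, hQu, hz⟩, hzu, hzv⟩
    · exact Set.sUnion_subset fun Q hQch => (hchS hQch).2
  obtain ⟨M, hQ₀M, hMS, hMmax⟩ :=
    zorn_subset_nonempty {Q : Set X | IsIF r Q ∧ Q ⊆ F} hzorn Q₀ ⟨hQ₀IF, hQ₀F⟩
  refine ⟨M, ⟨hMS.1, hMS.2, ?_⟩, c 1, hQ₀M hc1Q₀, hc0 ▸ hpc 0⟩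
  intro Q' hQ'IF hQ'F hMQ'
  exact Set.Subset.antisymm hMQ' (hMmax ⟨hQ'IF, hQ'F⟩ hMQ')

/-- Dual of `exists_decF`. -/
lemma exists_decP (htr : Transitive r) (hd : Dense' r) {P : Set X}
    (hP : IsPastSet r P) {z : X} (hz : z ∈ P) :
    ∃ Q ∈ decP r P, ∃ z' ∈ Q, r z z' := by
  have htr' : Transitive (flip r) := fun a b c h1 h2 => htr h2 h1
  have hd' : Dense' (flip r) := by
    intro x y hxy
    obtain ⟨d, hd1, hd2⟩ := hd y x hxy
    exact ⟨d, hd2, hd1⟩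
  exact exists_decF (r := flip r) htr' hd' (F := P) hP hz

/-- Both components of any element of a completion are past/future sets. -/
lemma compSets (h : IsChronSet r) {Xb : Set (Set X × Set X)} (hc : IsCompletion r Xb)
    {p : Set X × Set X} (hp : p ∈ Xb) : IsPastSet r p.1 ∧ IsFutureSet r p.2 := by
  have htr := h.1
  have hd := chronSet_dense h
  rcases hc.2.1 hp with ⟨x, hx⟩ | ⟨c, -, h1, h2, -⟩
  · subst hx
    constructor
    · apply Set.Subset.antisymm
      · intro y hyx
        obtain ⟨d, hyd, hdx⟩ := hd y x hyx
        exact ⟨d, hdx, hyd⟩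
      · rintro y ⟨s, hsx, hys⟩
        exact htr hys hsx
    · apply Set.Subset.antisymm
      · intro y hxy
        obtain ⟨d, hxd, hdy⟩ := hd x y hxy
        exact ⟨d, hxd, hdy⟩
      · rintro y ⟨s, hxs, hsy⟩
        exact htr hxs hsy
  · exact ⟨h1, h2⟩

lemma mem_of_pastSet {P : Set X} (hP : IsPastSet r P) {z : X} (hz : z ∈ P) :
    ∃ s ∈ P, r z s := by
  have hP' : P = pastOf r P := hP
  rw [hP'] at hz; exact hz

lemma down_of_pastSet {P : Set X} (hP : IsPastSet r P) {s z : X} (hs : s ∈ P)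
    (hzs : r z s) : z ∈ P := by
  have hP' : P = pastOf r P := hP
  rw [hP']; exact ⟨s, hs, hzs⟩

/-- Key lemma: for an element `(P, F)` of a completion, everything in `P` is
chronologically before everything in `F`. -/
lemma key (h : IsChronSet r) {Xb : Set (Set X × Set X)} (hc : IsCompletion r Xb)
    {p : Set X × Set X} (hp : p ∈ Xb) {z y : X} (hz : z ∈ p.1) (hy : y ∈ p.2) :
    r z y := by
  have htr := h.1
  have hd := chronSet_dense h
  have hPF := compSets h hc hp
  rcases hc.2.1 hp with ⟨x, hx⟩ | ⟨c, -, -, -, hor⟩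
  · subst hx
    exact htr hz hy
  · rcases hor with ⟨hfc, hP1, hdec⟩ | ⟨hpc, hP2, hdec⟩
    · rw [hP1] at hz
      obtain ⟨-, ⟨k, rfl⟩, hzk⟩ := hz
      obtain ⟨Q, hQdec, y', hy'Q, hy'y⟩ := exists_decF htr hd hPF.2 hy
      have hy'LI := (hdec hQdec).2.1 hy'Q
      simp only [seqLI, Set.mem_iUnion, Set.mem_iInter] at hy'LI
      obtain ⟨N, hN⟩ := hy'LI
      have hkm : k < max N (k + 1) := lt_of_lt_of_le (Nat.lt_succ_self k) (le_max_right _ _)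
      have h1 : r (c k) (c (max N (k + 1))) := futureChain_lt htr hfc hkm
      have h2 : r (c (max N (k + 1))) y' := hN _ (le_max_left _ _)
      exact htr (htr (htr hzk h1) h2) hy'y
    · rw [hP2] at hy
      obtain ⟨-, ⟨k, rfl⟩, hky⟩ := hy
      obtain ⟨Q, hQdec, z', hz'Q, hzz'⟩ := exists_decP htr hd hPF.1 hz
      have hz'LI := (hdec hQdec).2.1 hz'Q
      simp only [seqLI, Set.mem_iUnion, Set.mem_iInter] at hz'LI
      obtain ⟨N, hN⟩ := hz'LI
      have hkm : k < max N (k + 1) := lt_of_lt_of_le (Nat.lt_succ_self k) (le_max_right _ _)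
      have h1 : r (c (max N (k + 1))) (c k) := pastChain_lt htr hpc hkm
      have h2 : r z' (c (max N (k + 1))) := hN _ (le_max_left _ _)
      exact htr (htr (htr hzz' h2) h1) hky

lemma subRel_trans (h : IsChronSet r) {Xb : Set (Set X × Set X)}
    (hc : IsCompletion r Xb) : Transitive (subRel Xb) := by
  rintro a b c ⟨z, hzF, hzP⟩ ⟨w, hwF, hwP⟩
  have hzw : r z w := key h hc b.2 hzP hwF
  exact ⟨z, hzF, down_of_pastSet (compSets h hc c.2).1 hwP hzw⟩

lemma subRel_irrefl (h : IsChronSet r) {Xb : Set (Set X × Set X)}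
    (hc : IsCompletion r Xb) : Irreflexive (subRel Xb) := by
  rintro a ⟨z, hzF, hzP⟩
  exact h.2.1 z (key h hc a.2 hzP hzF)

/-- Interleaved future chains have exactly the same endpoints. -/
lemma endpoint_interleave {Y : Type*} {s : Y → Y → Prop} (htr : Transitive s)
    (hirr : Irreflexive s) {σ τ : ℕ → Y} (hσ : IsFutureChain s σ)
    (hτ : IsFutureChain s τ) (h1 : ∀ n, s (σ n) (τ n)) (h2 : ∀ n, s (τ n) (σ (n + 1)))
    (p : Set Y × Set Y) : IsEndpoint s σ p ↔ IsEndpoint s τ p := by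
  have hrange : pastOf s (Set.range σ) = pastOf s (Set.range τ) := by
    ext a; constructor
    · rintro ⟨-, ⟨n, rfl⟩, ha⟩
      exact ⟨τ n, ⟨n, rfl⟩, htr ha (h1 n)⟩
    · rintro ⟨-, ⟨n, rfl⟩, ha⟩
      exact ⟨σ (n + 1), ⟨n + 1, rfl⟩, htr ha (h2 n)⟩
  have hLI : seqLI (fun n => futPt s (σ n)) = seqLI (fun n => futPt s (τ n)) := by
    ext a
    simp only [seqLI, Set.mem_iUnion, Set.mem_iInter, futPt, Set.mem_setOf_eq]
    constructor
    · rintro ⟨n, hn⟩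
      exact ⟨n, fun k hk => htr (h2 k) (hn (k + 1) (by omega))⟩
    · rintro ⟨n, hn⟩
      exact ⟨n, fun k hk => htr (h1 k) (hn k hk)⟩
  have hLS : seqLS (fun n => futPt s (σ n)) = seqLS (fun n => futPt s (τ n)) := by
    ext a
    simp only [seqLS, Set.mem_iInter, Set.mem_iUnion, futPt, Set.mem_setOf_eq,
      exists_prop]
    constructor
    · intro H n
      obtain ⟨k, hk, hka⟩ := H (n + 1)
      have hk1 : k - 1 + 1 = k := by omega
      refine ⟨k - 1, by omega, htr ?_ hka⟩
      have := h2 (k - 1)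
      rwa [hk1] at this
    · intro H n
      obtain ⟨k, hk, hka⟩ := H n
      exact ⟨k, hk, htr (h1 k) hka⟩
  have hL : Lcheck s σ = Lcheck s τ := by
    unfold Lcheck
    rw [hLI, hLS]
  have hnp : ∀ c : ℕ → Y, IsFutureChain s c → ¬ IsPastChain s c := by
    intro c hf hpc
    exact hirr (c 0) (htr (hf 0) (hpc 0))
  constructor
  · rintro ⟨hPp, hFp, hcase⟩
    rcases hcase with ⟨-, hpe, hde⟩ | ⟨hps, -, -⟩
    · exact ⟨hPp, hFp, Or.inl ⟨hτ, by rw [hpe, hrange], by rw [← hL]; exact hde⟩⟩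
    · exact absurd hps (hnp σ hσ)
  · rintro ⟨hPp, hFp, hcase⟩
    rcases hcase with ⟨-, hpe, hde⟩ | ⟨hps, -, -⟩
    · exact ⟨hPp, hFp, Or.inl ⟨hσ, by rw [hpe, hrange], by rw [hL]; exact hde⟩⟩
    · exact absurd hps (hnp τ hτ)

lemma isEndpoint_flip {Y : Type*} {s : Y → Y → Prop} (c : ℕ → Y) (p : Set Y × Set Y) :
    IsEndpoint s c p ↔ IsEndpoint (flip s) c (p.2, p.1) := by
  constructor <;> rintro ⟨hP, hF, hor⟩ <;> exact ⟨hF, hP, hor.symm⟩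

/-- Interleaved past chains have exactly the same endpoints. -/
lemma endpoint_interleave_past {Y : Type*} {s : Y → Y → Prop} (htr : Transitive s)
    (hirr : Irreflexive s) {σ τ : ℕ → Y} (hσ : IsPastChain s σ)
    (hτ : IsPastChain s τ) (h1 : ∀ n, s (τ n) (σ n)) (h2 : ∀ n, s (σ (n + 1)) (τ n))
    (p : Set Y × Set Y) : IsEndpoint s σ p ↔ IsEndpoint s τ p := by
  rw [isEndpoint_flip (s := s) σ p, isEndpoint_flip (s := s) τ p]
  exact endpoint_interleave (s := flip s) (fun a b c hab hbc => htr hbc hab)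
    (fun a => hirr a) hσ hτ h1 h2 (p.2, p.1)

end Stmt10Aux


/-- Lemma 5.2 (ii): for every chain `ς` in `X̄` there is a chain
`δ` in `X` such that `i[δ]` and `ς` have exactly the same endpoints (as pairs of past
and future sets of the chronological set `(X̄, ≪̄)`). -/
theorem stmt10 {X : Type*} (r : X → X → Prop) (h : IsChronSet r) (hw : WeaklyDist r)
    (Xb : Set (Set X × Set X)) (hc : IsCompletion r Xb)
    (ς : ℕ → ↥Xb) (hch : IsChronChain (subRel Xb) ς) :
    ∃ δ : ℕ → X, IsChronChain r δ ∧
      ∀ p : Set ↥Xb × Set ↥Xb,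
        IsEndpoint (subRel Xb) (fun i => iota r Xb hc.1 (δ i)) p ↔
        IsEndpoint (subRel Xb) ς p := by
  classical
  clear hw
  have hstr := Stmt10Aux.subRel_trans h hc
  have hsirr := Stmt10Aux.subRel_irrefl h hc
  rcases hch with hfc | hpc
  · -- ς is a future chain in X̄
    have hx : ∀ n, ∃ z, z ∈ (ς n).1.2 ∧ z ∈ (ς (n + 1)).1.1 := fun n => hfc n
    choose x hx1 hx2 using hx
    have hδ : IsFutureChain r x := fun n =>
      Stmt10Aux.key h hc (ς (n + 1)).2 (hx2 n) (hx1 (n + 1))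
    have h1 : ∀ n, subRel Xb (ς n) (iota r Xb hc.1 (x n)) := by
      intro n
      obtain ⟨z, hz1, hz2⟩ :=
        Stmt10Aux.mem_of_futureSet (Stmt10Aux.compSets h hc (ς n).2).2 (hx1 n)
      exact ⟨z, hz1, hz2⟩
    have h2 : ∀ n, subRel Xb (iota r Xb hc.1 (x n)) (ς (n + 1)) := by
      intro n
      obtain ⟨z, hz1, hz2⟩ :=
        Stmt10Aux.mem_of_pastSet (Stmt10Aux.compSets h hc (ς (n + 1)).2).1 (hx2 n)
      exact ⟨z, hz2, hz1⟩
    have hτ : IsFutureChain (subRel Xb) (fun i => iota r Xb hc.1 (x i)) :=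
      fun n => hstr (h2 n) (h1 (n + 1))
    exact ⟨x, Or.inl hδ, fun p =>
      (Stmt10Aux.endpoint_interleave hstr hsirr hfc hτ h1 h2 p).symm⟩
  · -- ς is a past chain in X̄
    have hx : ∀ n, ∃ z, z ∈ (ς (n + 1)).1.2 ∧ z ∈ (ς n).1.1 := fun n => hpc n
    choose x hx1 hx2 using hx
    have hδ : IsPastChain r x := fun n =>
      Stmt10Aux.key h hc (ς (n + 1)).2 (hx2 (n + 1)) (hx1 n)
    have h1 : ∀ n, subRel Xb (iota r Xb hc.1 (x n)) (ς n) := by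
      intro n
      obtain ⟨z, hz1, hz2⟩ :=
        Stmt10Aux.mem_of_pastSet (Stmt10Aux.compSets h hc (ς n).2).1 (hx2 n)
      exact ⟨z, hz2, hz1⟩
    have h2 : ∀ n, subRel Xb (ς (n + 1)) (iota r Xb hc.1 (x n)) := by
      intro n
      obtain ⟨z, hz1, hz2⟩ :=
        Stmt10Aux.mem_of_futureSet (Stmt10Aux.compSets h hc (ς (n + 1)).2).2 (hx1 n)
      exact ⟨z, hz1, hz2⟩
    have hτ : IsPastChain (subRel Xb) (fun i => iota r Xb hc.1 (x i)) :=
      fun n => hstr (h1 (n + 1)) (h2 n)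
    exact ⟨x, Or.inr hδ, fun p =>
      (Stmt10Aux.endpoint_interleave_past hstr hsirr hpc hτ h1 h2 p).symm⟩
end

section
/- Let ς be a (future or past) chain in a weakly distinguishing chronological set X and let x ∈ X. If i(x) = (I⁻(x), I⁺(x)) is an endpoint of ς, then x ∈ L(ς). If, in addition, X is regular (past- and future-regular), then the converse holds: x ∈ L(ς) implies that i(x) is an endpoint of ς. -/
namespace CausalBoundary

variable {X : Type*}

/-- `X` is past-regular: `I⁻(x)` is an IP for every `x`. -/
def PastRegular (r : X → X → Prop) : Prop := ∀ x : X, IsIP r (pastPt r x)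

/-- `X` is future-regular: `I⁺(x)` is an IF for every `x`. -/
def FutureRegular (r : X → X → Prop) : Prop := ∀ x : X, IsIF r (futPt r x)

end CausalBoundary

namespace CausalBoundary

section Aux

variable {X : Type*} {r : X → X → Prop} {c : ℕ → X}

lemma chain_mono (htr : Transitive r) (hc : IsFutureChain r c) :
    ∀ {m n : ℕ}, m ≤ n → ∀ {y : X}, r y (c m) → r y (c n) := by
  intro m n hmn
  induction hmn with
  | refl => exact fun hy => hy
  | step h ih => exact fun hy => htr (ih hy) (hc _)

lemma pastPt_isPastSet (htr : Transitive r)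
    (hd : ∀ x y : X, r x y → ∃ d, r x d ∧ r d y) (x : X) :
    IsPastSet r (pastPt r x) := by
  apply Set.Subset.antisymm
  · intro y hy
    obtain ⟨d, h1, h2⟩ := hd y x hy
    exact ⟨d, h2, h1⟩
  · rintro y ⟨s, hs, hys⟩
    exact htr hys hs

lemma seqLI_eq (htr : Transitive r) (hc : IsFutureChain r c) :
    seqLI (fun n => pastPt r (c n)) = pastOf r (Set.range c) := by
  ext y
  simp only [seqLI, pastOf, pastPt, Set.mem_iUnion, Set.mem_iInter, Set.mem_setOf_eq,
    Set.mem_range]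
  constructor
  · rintro ⟨n, hn⟩
    exact ⟨c n, ⟨n, rfl⟩, hn n le_rfl⟩
  · rintro ⟨s, ⟨n, rfl⟩, hy⟩
    exact ⟨n, fun k hk => chain_mono htr hc hk hy⟩

lemma seqLS_eq (htr : Transitive r) (hc : IsFutureChain r c) :
    seqLS (fun n => pastPt r (c n)) = pastOf r (Set.range c) := by
  ext y
  simp only [seqLS, pastOf, pastPt, Set.mem_iInter, Set.mem_iUnion, Set.mem_setOf_eq,
    Set.mem_range]
  constructor
  · intro hy
    obtain ⟨k, _, hk⟩ := hy 0
    exact ⟨c k, ⟨k, rfl⟩, hk⟩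
  · rintro ⟨s, ⟨m, rfl⟩, hy⟩ n
    exact ⟨max n m, le_max_left n m, chain_mono htr hc (le_max_right n m) hy⟩

lemma isIP_pastOf_chain (htr : Transitive r) (hc : IsFutureChain r c) :
    IsIP r (pastOf r (Set.range c)) := by
  have hcm : ∀ n, c n ∈ pastOf r (Set.range c) := fun n => ⟨c (n + 1), ⟨n + 1, rfl⟩, hc n⟩
  refine ⟨?_, ⟨c 0, hcm 0⟩, ?_⟩
  · apply Set.Subset.antisymm
    · rintro y ⟨s, ⟨n, rfl⟩, hy⟩
      exact ⟨c n, hcm n, hy⟩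
    · rintro y ⟨s, ⟨t, ht, hst⟩, hys⟩
      exact ⟨t, ht, htr hys hst⟩
  · rintro ⟨P₁, P₂, h1, h2, hs1, hs2, heq⟩
    by_cases hcof : ∀ n, ∃ k, n ≤ k ∧ c k ∈ P₁
    · apply hs1.2
      rintro y ⟨s, ⟨m, rfl⟩, hy⟩
      obtain ⟨k, hk, hck⟩ := hcof m
      rw [h1]
      exact ⟨c k, hck, chain_mono htr hc hk hy⟩
    · push_neg at hcof
      obtain ⟨n, hn⟩ := hcof
      apply hs2.2
      rintro y ⟨s, ⟨m, rfl⟩, hy⟩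
      have hmem : c (max n m) ∈ P₁ ∪ P₂ := heq ▸ hcm (max n m)
      have hck : c (max n m) ∈ P₂ := by
        rcases hmem with hmm | hmm
        · exact absurd hmm (hn _ (le_max_left n m))
        · exact hmm
      rw [h2]
      exact ⟨c (max n m), hck, chain_mono htr hc (le_max_right n m) hy⟩

lemma past_side (htr : Transitive r) (hc : IsFutureChain r c) (x : X)
    (hx : pastPt r x = pastOf r (Set.range c)) :
    decP r (pastPt r x) ⊆ Lhat r c := by
  intro Q hQ
  rw [decP, Set.mem_setOf_eq, hx] at hQ
  obtain ⟨hIP, hsub, hmax⟩ := hQ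
  refine ⟨hIP, ?_, ?_, ?_⟩
  · rw [seqLI_eq htr hc]; exact hsub
  · rw [seqLS_eq htr hc]; exact hsub
  · intro P' hP' hP'sub hQP'
    exact hmax P' hP' (by rwa [seqLS_eq htr hc] at hP'sub) hQP'

lemma past_side_conv (htr : Transitive r) (hc : IsFutureChain r c) (x : X)
    (hreg : IsIP r (pastPt r x)) (hL : decP r (pastPt r x) ⊆ Lhat r c) :
    pastPt r x = pastOf r (Set.range c) := by
  have hmem : pastPt r x ∈ decP r (pastPt r x) :=
    ⟨hreg, subset_rfl, fun Q' _ hsub hsup => Set.Subset.antisymm hsup hsub⟩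
  obtain ⟨_, hLI, _, hmax⟩ := hL hmem
  rw [seqLI_eq htr hc] at hLI
  exact hmax _ (isIP_pastOf_chain htr hc) (by rw [seqLS_eq htr hc]) hLI

end Aux

end CausalBoundary

open CausalBoundary

/-- Thm. 6.6 (1): if `i(x)` is an endpoint of a chain `ς` then
`x ∈ L(ς)`; the converse holds when `X` is in addition regular (past- and
future-regular). -/
theorem stmt13 {X : Type*} (r : X → X → Prop) (h : IsChronSet r) (hw : WeaklyDist r)
    (c : ℕ → X) (hc : IsChronChain r c) (x : X) :
    (IsEndpoint r c (inj r x) → x ∈ limitOp r c) ∧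
    (PastRegular r → FutureRegular r → x ∈ limitOp r c → IsEndpoint r c (inj r x)) := by
  obtain ⟨htr, hirr, -, D, -, hdD⟩ := h
  have hd : ∀ x y : X, r x y → ∃ d, r x d ∧ r d y := by
    intro x y hxy
    obtain ⟨d, -, h1, h2⟩ := hdD x y hxy
    exact ⟨d, h1, h2⟩
  have htr' : Transitive (flip r) := fun _ _ _ hab hbc => htr hbc hab
  have hd' : ∀ x y : X, flip r x y → ∃ d, flip r x d ∧ flip r d y := by
    intro x y hxy
    obtain ⟨d, h1, h2⟩ := hd y x hxy
    exact ⟨d, h2, h1⟩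
  constructor
  · rintro ⟨-, -, ⟨hfc, heq, hLc⟩ | ⟨hpc, heq, hLh⟩⟩
    · exact ⟨past_side htr hfc x heq, hLc⟩
    · exact ⟨hLh, past_side htr' hpc x heq⟩
  · intro hpr hfr hL
    refine ⟨pastPt_isPastSet htr hd x, pastPt_isPastSet htr' hd' x, ?_⟩
    rcases hc with hfc | hpc
    · exact Or.inl ⟨hfc, past_side_conv htr hfc x (hpr x) hL.1, hL.2⟩
    · exact Or.inr ⟨hpc, past_side_conv htr' hpc x (hfr x) hL.2, hL.1⟩
end

section
/- If ς is a (future or past) chain in a complete weakly distinguishing chronological set Y, then ς has some limit in Y with respect to the limit operator L: there exists y ∈ Y with y ∈ L(ς). -/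
namespace CausalBoundary

variable {X : Type*}

/-- `X` is (chronologically) complete: every chain in `X` has some endpoint in `i[X]`. -/
def IsCompleteChron (r : X → X → Prop) : Prop :=
  ∀ c : ℕ → X, IsChronChain r c → ∃ y : X, IsEndpoint r c (inj r y)

end CausalBoundary

open CausalBoundary

namespace CausalBoundary

/-- Monotonicity along a future chain. -/
lemma chain_mono_s15 {X : Type*} {r : X → X → Prop} (ht : Transitive r) {c : ℕ → X}
    (hc : IsFutureChain r c) {m k : ℕ} (hmk : m ≤ k) {x : X} (hx : r x (c m)) :
    r x (c k) := by
  induction k, hmk using Nat.le_induction with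
  | base => exact hx
  | succ k _ ih => exact ht ih (hc k)

/-- The past of a future chain is an element of `L̂`, and is the unique element of
`dec` of itself. -/
lemma key {X : Type*} {r : X → X → Prop} (ht : Transitive r) {c : ℕ → X}
    (hc : IsFutureChain r c) :
    decP r (pastOf r (Set.range c)) ⊆ Lhat r c := by
  set P : Set X := pastOf r (Set.range c) with hP
  have hmemP : ∀ x, x ∈ P ↔ ∃ n, r x (c n) := by
    intro x
    constructor
    · rintro ⟨s, ⟨n, rfl⟩, hxs⟩; exact ⟨n, hxs⟩
    · rintro ⟨n, hxn⟩; exact ⟨c n, ⟨n, rfl⟩, hxn⟩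
  have hcP : ∀ n, c n ∈ P := fun n => (hmemP _).2 ⟨n + 1, hc n⟩
  have hpast : IsPastSet r P := by
    apply Set.Subset.antisymm
    · intro x hx
      rcases (hmemP x).1 hx with ⟨n, hn⟩
      exact ⟨c n, hcP n, hn⟩
    · rintro x ⟨s, hs, hxs⟩
      rcases (hmemP s).1 hs with ⟨n, hn⟩
      exact (hmemP x).2 ⟨n, ht hxs hn⟩
  have hLSsub : seqLS (fun n => pastPt r (c n)) ⊆ P := by
    intro x hx
    have := Set.mem_iInter.1 hx 0
    rcases Set.mem_iUnion.1 this with ⟨k, hk⟩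
    rcases Set.mem_iUnion.1 hk with ⟨_, hxk⟩
    exact (hmemP x).2 ⟨k, hxk⟩
  have hLIsub : P ⊆ seqLI (fun n => pastPt r (c n)) := by
    intro x hx
    rcases (hmemP x).1 hx with ⟨m, hm⟩
    refine Set.mem_iUnion.2 ⟨m, ?_⟩
    refine Set.mem_iInter.2 fun k => Set.mem_iInter.2 fun hk => ?_
    exact chain_mono_s15 ht hc hk hm
  have hLILS : seqLI (fun n => pastPt r (c n)) ⊆ seqLS (fun n => pastPt r (c n)) := by
    intro x hx
    rcases Set.mem_iUnion.1 hx with ⟨m, hm⟩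
    refine Set.mem_iInter.2 fun n => Set.mem_iUnion.2 ⟨max m n, Set.mem_iUnion.2
      ⟨le_max_right m n, ?_⟩⟩
    exact Set.mem_iInter.1 (Set.mem_iInter.1 hm (max m n)) (le_max_left m n)
  have hIP : IsIP r P := by
    refine ⟨hpast, ⟨c 0, hcP 0⟩, ?_⟩
    rintro ⟨P₁, P₂, hp1, hp2, hs1, hs2, hu⟩
    rcases Set.exists_of_ssubset hs1 with ⟨a, haP, haP1⟩
    rcases Set.exists_of_ssubset hs2 with ⟨b, hbP, hbP2⟩
    rcases (hmemP a).1 haP with ⟨m, hma⟩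
    rcases (hmemP b).1 hbP with ⟨n, hnb⟩
    have hck : c (max m n) ∈ P := hcP _
    rw [hu] at hck
    rcases hck with hck | hck
    · have : a ∈ pastOf r P₁ := ⟨c (max m n), hck, chain_mono_s15 ht hc (le_max_left m n) hma⟩
      exact haP1 (hp1 ▸ this)
    · have : b ∈ pastOf r P₂ := ⟨c (max m n), hck, chain_mono_s15 ht hc (le_max_right m n) hnb⟩
      exact hbP2 (hp2 ▸ this)
  intro Q hQ
  have hQP : Q = P := hQ.2.2 P hIP (le_refl _) hQ.2.1
  subst hQP
  exact ⟨hIP, hLIsub, fun x hx => hLILS (hLIsub hx),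
    fun P' hP' hP'LS hPP' => Set.Subset.antisymm hPP' (fun x hx => hLSsub (hP'LS hx))⟩

end CausalBoundary

/-- Cor. 6.7: every chain in a complete weakly distinguishing
chronological set has some limit with respect to the limit operator `L`. -/
theorem stmt15 {X : Type*} (r : X → X → Prop) (h : IsChronSet r) (hw : WeaklyDist r)
    (hcomp : IsCompleteChron r) (c : ℕ → X) (hc : IsChronChain r c) :
    ∃ y : X, y ∈ limitOp r c := by
  obtain ⟨y, hy⟩ := hcomp c hc
  have htflip : Transitive (flip r) := fun _ _ _ hab hbc => h.1 hbc hab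
  rcases hy.2.2 with ⟨hfc, h1, h2⟩ | ⟨hpc, h1, h2⟩
  · refine ⟨y, ?_, h2⟩
    have hrw : pastPt r y = pastOf r (Set.range c) := h1
    rw [show decP r (pastPt r y) = decP r (pastOf r (Set.range c)) by rw [hrw]]
    exact key h.1 hfc
  · refine ⟨y, h2, ?_⟩
    have hrw : futPt r y = futureOf r (Set.range c) := h1
    rw [show decF r (futPt r y) = decF r (futureOf r (Set.range c)) by rw [hrw]]
    exact key (r := flip r) htflip (c := c) hpc
end
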